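/- arXiv:1508.07337 — 5 statements merged into one kernel-verified Lean document; each statement's English description precedes it below -/
import Mathlib

section
/- For every directed graph G, the affine zero locus Z(G) of the incidence ideal is a union of finitely many ℂ-linear subspaces of ℂ^{E(G)}: there exist finitely many ℂ-submodules L_1, …, L_r of the space of functions E(G) → ℂ such that Z(G) = L_1 ∪ … ∪ L_r. -/
open MvPolynomial

/-- The `l`-th elementary symmetric polynomial in the finite set `s` of variables
(`1` for `l = 0`, `0` for `l > |s|`). -/
noncomputable def esymmOf (R : Type) [CommRing R] {E : Type} (s : Finset E) (l : ℕ) :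
    MvPolynomial E R :=
  ∑ t ∈ s.powersetCard l, ∏ x ∈ t, X x

/-- The incidence ideal of the directed graph with edge-endpoint maps `src`, `tgt`:
the ideal generated by the incidence relations
`δ_{v,l} = e_l(edges out of v) - e_l(edges into v)` for all vertices `v` and all `l ≥ 1`
(for `l > k_v` the relation `δ_{v,l}` is the zero polynomial, so this ideal is generated by
the `δ_{v,l}` with `1 ≤ l ≤ k_v`). -/
noncomputable def incidenceIdeal (R : Type) [CommRing R] {V E : Type}
    [Fintype E] [DecidableEq V] (src tgt : E → V) : Ideal (MvPolynomial E R) :=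
  Ideal.span {f | ∃ (v : V) (l : ℕ), 1 ≤ l ∧
    f = esymmOf R (Finset.univ.filter fun x => src x = v) l
      - esymmOf R (Finset.univ.filter fun x => tgt x = v) l}

/-- The affine zero locus in `ℂ^E` of an ideal of `ℤ[E]`. -/
def zeroLocus {E : Type} (I : Ideal (MvPolynomial E ℤ)) : Set (E → ℂ) :=
  {p | ∀ f ∈ I, MvPolynomial.aeval p f = 0}

/-!
For `l ≥ 1` the elementary symmetric functions of a multiset of complex numbers ignore its zeros,
and on multisets of nonzero numbers they are injective (such a multiset is the root multiset of
`∏ (X - a)`). Hence `p ∈ Z(G)` iff at every vertex the nonzero values of `p` on the outgoing and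
on the incoming edges agree as multisets. This condition survives replacing `p` by `φ ∘ p` for
any `φ` with `φ 0 = 0`, so `Z(G)` is the union, over `p ∈ Z(G)`, of the linear spaces of such
`φ ∘ p`. Such a space only depends on which edges `p` identifies and where `p` vanishes, so only
finitely many of them occur.
-/

namespace Multiset

section CommSemiring

variable {R : Type*} [CommSemiring R]

@[simp]
theorem esymm_zero_right (s : Multiset R) : s.esymm 0 = 1 := by
  simp [esymm, powersetCard_zero_left]

theorem esymm_cons_succ (a : R) (s : Multiset R) (n : ℕ) :
    (a ::ₘ s).esymm (n + 1) = s.esymm (n + 1) + a * s.esymm n := by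
  simp only [esymm, powersetCard_cons, map_add, sum_add, map_map, Function.comp_def, prod_cons,
    sum_map_mul_left]

theorem esymm_filter_ne_zero [DecidableEq R] (s : Multiset R) (n : ℕ) :
    (s.filter (· ≠ 0)).esymm n = s.esymm n := by
  induction s using Multiset.induction generalizing n with
  | empty => rfl
  | cons a s ih =>
    rcases n with _ | n
    · simp
    by_cases ha : a = 0
    · rw [filter_cons_of_neg (p := (· ≠ 0)) _ (not_not.mpr ha), ih, esymm_cons_succ, ha,
        zero_mul, add_zero]
    · rw [filter_cons_of_pos (p := (· ≠ 0)) _ ha, esymm_cons_succ, esymm_cons_succ, ih, ih]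

theorem filter_ne_zero_add_replicate_zero [DecidableEq R] (s : Multiset R) (k : ℕ) :
    (s + replicate k 0).filter (· ≠ 0) = s.filter (· ≠ 0) := by
  rw [filter_add, add_eq_left, filter_eq_nil]
  exact fun a ha => not_not.mpr (eq_of_mem_replicate ha)

theorem esymm_add_replicate_zero [DecidableEq R] (s : Multiset R) (k n : ℕ) :
    (s + replicate k 0).esymm n = s.esymm n := by
  rw [← esymm_filter_ne_zero, filter_ne_zero_add_replicate_zero, esymm_filter_ne_zero]

end CommSemiring

section IsDomain

variable {R : Type*} [CommRing R] [IsDomain R]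

theorem eq_of_card_eq_of_esymm_eq {s t : Multiset R} (hcard : card s = card t)
    (h : ∀ n, s.esymm n = t.esymm n) : s = t := by
  have hprod : (s.map fun r => Polynomial.X - Polynomial.C r).prod =
      (t.map fun r => Polynomial.X - Polynomial.C r).prod := by
    simp only [prod_X_sub_X_eq_sum_esymm, hcard, h]
  simpa only [Polynomial.roots_multiset_prod_X_sub_C] using congrArg Polynomial.roots hprod

theorem esymm_eq_iff_filter_ne_zero_eq [DecidableEq R] {s t : Multiset R} :
    (∀ n, s.esymm n = t.esymm n) ↔ s.filter (· ≠ 0) = t.filter (· ≠ 0) := by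
  refine ⟨fun h => ?_, fun h n => by rw [← esymm_filter_ne_zero, h, esymm_filter_ne_zero]⟩
  -- padding with zeros equalizes the cardinalities without changing any `esymm`
  have hpad : s + replicate (card t) 0 = t + replicate (card s) 0 := by
    refine eq_of_card_eq_of_esymm_eq (by simp [add_comm]) fun n => ?_
    rw [esymm_add_replicate_zero, esymm_add_replicate_zero, h]
  simpa only [filter_ne_zero_add_replicate_zero] using congrArg (filter (· ≠ 0)) hpad

end IsDomain

theorem filter_ne_zero_map_filter_ne_zero {α β : Type*} [Zero α] [Zero β] [DecidableEq α]
    [DecidableEq β] (s : Multiset α) {φ : α → β} (hφ : φ 0 = 0) :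
    ((s.filter (· ≠ 0)).map φ).filter (· ≠ 0) = (s.map φ).filter (· ≠ 0) := by
  conv_rhs => rw [← filter_add_not (· ≠ 0) s, map_add, filter_add]
  rw [left_eq_add, filter_eq_nil]
  intro b hb
  obtain ⟨a, ha, rfl⟩ := mem_map.mp hb
  simp [not_not.mp (mem_filter.mp ha).2, hφ]

end Multiset

section LevelSubspace

variable {K E : Type*} [Semiring K]

def patternSubspace (r : E → E → Prop) (Z : Set E) : Submodule K (E → K) where
  carrier := {q | (∀ a b, r a b → q a = q b) ∧ ∀ e ∈ Z, q e = 0}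
  add_mem' := fun hq hq' =>
    ⟨fun a b hab => by simp [hq.1 a b hab, hq'.1 a b hab],
      fun e he => by simp [hq.2 e he, hq'.2 e he]⟩
  zero_mem' := ⟨fun _ _ _ => rfl, fun _ _ => rfl⟩
  smul_mem' := fun c _ hq =>
    ⟨fun a b hab => by simp [hq.1 a b hab], fun e he => by simp [hq.2 e he]⟩

def levelSubspace (p : E → K) : Submodule K (E → K) :=
  patternSubspace (fun a b => p a = p b) {e | p e = 0}

theorem mem_levelSubspace_self (p : E → K) : p ∈ levelSubspace p :=
  ⟨fun _ _ => id, fun _ => id⟩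

theorem exists_comp_of_mem_levelSubspace {p q : E → K} (hq : q ∈ levelSubspace p) :
    ∃ φ : K → K, φ 0 = 0 ∧ q = φ ∘ p := by
  have hfac : q.FactorsThrough p := hq.1
  refine ⟨Function.extend p q 0, ?_, funext fun e => (hfac.extend_apply 0 e).symm⟩
  by_cases h0 : ∃ e, p e = 0
  · obtain ⟨e, he⟩ := h0
    simpa only [he] using (hfac.extend_apply 0 e).trans (hq.2 e he)
  · exact Function.extend_apply' _ _ _ h0

theorem finite_range_levelSubspace [Finite E] :
    (Set.range (levelSubspace : (E → K) → Submodule K (E → K))).Finite :=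
  (Set.finite_range fun d : (E → E → Prop) × Set E => patternSubspace d.1 d.2).subset <| by
    rintro _ ⟨p, rfl⟩
    exact ⟨(fun a b => p a = p b, {e | p e = 0}), rfl⟩

end LevelSubspace

theorem aeval_esymmOf {R S E : Type} [CommRing R] [CommRing S] [Algebra R S] (p : E → S)
    (s : Finset E) (l : ℕ) : aeval p (esymmOf R s l) = (s.val.map p).esymm l := by
  simp [esymmOf, Finset.esymm_map_val]

section IncidenceLocus

variable {V E : Type} [Fintype E] [DecidableEq V]

open Classical in
theorem mem_zeroLocus_incidenceIdeal_iff (src tgt : E → V) (p : E → ℂ) :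
    p ∈ zeroLocus (incidenceIdeal ℤ src tgt) ↔ ∀ v : V,
      ((Finset.univ.filter fun x => src x = v).val.map p).filter (· ≠ 0) =
        ((Finset.univ.filter fun x => tgt x = v).val.map p).filter (· ≠ 0) := by
  simp_rw [← Multiset.esymm_eq_iff_filter_ne_zero_eq]
  constructor
  · rintro hp v (_ | l)
    · simp
    · simpa [sub_eq_zero, aeval_esymmOf] using
        hp _ (Ideal.subset_span ⟨v, l + 1, l.succ_pos, rfl⟩)
  · intro h f hf
    refine Submodule.span_induction ?_ (map_zero _) (fun _ _ _ _ => ?_) (fun _ _ _ => ?_) hf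
    · rintro _ ⟨v, l, -, rfl⟩
      rw [map_sub, aeval_esymmOf, aeval_esymmOf, h v l, sub_self]
    · simp_all
    · simp_all

theorem levelSubspace_subset_zeroLocus {src tgt : E → V} {p : E → ℂ}
    (hp : p ∈ zeroLocus (incidenceIdeal ℤ src tgt)) :
    (levelSubspace p : Set (E → ℂ)) ⊆ zeroLocus (incidenceIdeal ℤ src tgt) := by
  classical
  intro q hq
  obtain ⟨φ, hφ, rfl⟩ := exists_comp_of_mem_levelSubspace hq
  rw [mem_zeroLocus_incidenceIdeal_iff] at hp ⊢
  intro v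
  rw [← Multiset.map_map, ← Multiset.map_map,
    ← Multiset.filter_ne_zero_map_filter_ne_zero _ hφ,
    ← Multiset.filter_ne_zero_map_filter_ne_zero (Multiset.map p _) hφ, hp v]

theorem zeroLocus_incidenceIdeal_eq_biUnion (src tgt : E → V) :
    zeroLocus (incidenceIdeal ℤ src tgt) =
      ⋃ p ∈ zeroLocus (incidenceIdeal ℤ src tgt), (levelSubspace p : Set (E → ℂ)) :=
  subset_antisymm (fun p hp => Set.mem_iUnion₂.mpr ⟨p, hp, mem_levelSubspace_self p⟩)
    (Set.iUnion₂_subset fun _ => levelSubspace_subset_zeroLocus)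

end IncidenceLocus

theorem stmt0_general {V E : Type} [Fintype E] [DecidableEq V]
    (src tgt : E → V) :
    ∃ (r : ℕ) (L : Fin r → Submodule ℂ (E → ℂ)),
      zeroLocus (incidenceIdeal ℤ src tgt) = ⋃ i, (L i : Set (E → ℂ)) := by
  have hfin : (levelSubspace '' zeroLocus (incidenceIdeal ℤ src tgt)).Finite :=
    finite_range_levelSubspace.subset (Set.image_subset_range _ _)
  obtain ⟨r, L, hL⟩ := hfin.fin_embedding
  refine ⟨r, L, ?_⟩
  rw [zeroLocus_incidenceIdeal_eq_biUnion, ← Set.biUnion_image, ← hL, Set.biUnion_range]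

theorem stmt0 {V E : Type} [Fintype V] [Fintype E] [DecidableEq V] [DecidableEq E]
    (src tgt : E → V) :
    ∃ (r : ℕ) (L : Fin r → Submodule ℂ (E → ℂ)),
      zeroLocus (incidenceIdeal ℤ src tgt) = ⋃ i, (L i : Set (E → ℂ)) :=
  stmt0_general src tgt
end

section
/- Let G be a directed graph. Then G contains no undirected cycle (equivalently, the underlying undirected graph of G is a disjoint union of trees) if and only if the incidence ideal I(G) equals the ideal of ℤ[E(G)] generated by all the edge variables, that is, if and only if ℤ[E(G)]/I(G) ≅ ℤ as graded rings. -/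
open MvPolynomial

/-- An undirected cycle in the directed graph with edge-endpoint maps `src`, `tgt`:
pairwise distinct vertices `v_0, …, v_n` and pairwise distinct edges `x_0, …, x_n`
such that `x_i` joins `v_i` and `v_{i+1}` with either orientation (indices mod `n+1`). -/
structure UndirCycle {V E : Type} (src tgt : E → V) where
  n : ℕ
  vtx : ZMod (n + 1) → V
  edge : ZMod (n + 1) → E
  vtx_inj : Function.Injective vtx
  edge_inj : Function.Injective edge
  edge_ends : ∀ i, (src (edge i) = vtx i ∧ tgt (edge i) = vtx (i + 1)) ∨
    (src (edge i) = vtx (i + 1) ∧ tgt (edge i) = vtx i)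

/-!
If there is no undirected cycle, every edge `e` is a bridge: the set `A` of vertices reachable
from `src e` without using `e` does not contain `tgt e`, and every other edge has both or neither
of its ends in `A`. Summing the linear relations `δ_{v,1}` over `v ∈ A` then leaves exactly `X e`.

Conversely, an undirected cycle carries a circulation `φ`, equal to `±1` on its edges according
to their orientation. The substitution `X x ↦ φ x • ε` into the dual numbers kills every
`δ_{v,l}`: for `l = 1` because `φ` is balanced at `v`, for `l ≥ 2` because `ε² = 0`. It does not
kill the variable of an edge of the cycle.
-/

lemma ZMod.val_add_one_eq_ite {n : ℕ} (j : ZMod (n + 1)) :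
    (j + 1).val = if j.val < n then j.val + 1 else 0 := by
  have hj : j.val < n + 1 := j.val_lt
  rw [ZMod.val_add, ZMod.val_one_eq_one_mod]
  rcases n with _ | n
  · simp [Nat.mod_one]
  · rw [Nat.one_mod_eq_one.2 (by omega)]
    split_ifs with h
    · exact Nat.mod_eq_of_lt (by omega)
    · rw [show j.val + 1 = n + 1 + 1 by omega, Nat.mod_self]

section Cycles

variable {V E : Type}

def Joins (src tgt : E → V) (x : E) (a b : V) : Prop :=
  (src x = a ∧ tgt x = b) ∨ (src x = b ∧ tgt x = a)

variable {src tgt : E → V}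

lemma Joins.symm {x : E} {a b : V} (h : Joins src tgt x a b) : Joins src tgt x b a :=
  Or.symm h

lemma Joins.eq_and_eq_or_eq_and_eq {x : E} {a b c d : V} (h₁ : Joins src tgt x a b)
    (h₂ : Joins src tgt x c d) : (a = c ∧ b = d) ∨ (a = d ∧ b = c) := by
  unfold Joins at h₁ h₂
  grind

lemma injOn_of_joins {n : ℕ} {f : ℕ → V} (hf : Set.InjOn f {i | i ≤ n}) {x : ℕ → E}
    (hx : ∀ i < n, Joins src tgt (x i) (f i) (f (i + 1))) : Set.InjOn x {i | i < n} := by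
  intro i hi j hj hij
  simp only [Set.mem_ofPred_eq] at hi hj
  have hf' : ∀ {k l}, k < n + 1 → l < n + 1 → f k = f l → k = l := fun hk hl h =>
    hf (Nat.lt_succ_iff.1 hk) (Nat.lt_succ_iff.1 hl) h
  rcases (hx i hi).eq_and_eq_or_eq_and_eq (hij ▸ hx j hj) with ⟨h, -⟩ | ⟨h₁, h₂⟩
  · exact hf' (by omega) (by omega) h
  · have := hf' (by omega) (by omega) h₁
    have := hf' (by omega) (by omega) h₂
    omega

def UndirCycle.ofPath (e : E) (n : ℕ) (f : ℕ → V) (hf : Set.InjOn f {i | i ≤ n})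
    (x : ℕ → E) (hxe : ∀ i < n, x i ≠ e) (hx : ∀ i < n, Joins src tgt (x i) (f i) (f (i + 1)))
    (h₀ : f 0 = src e) (hn : f n = tgt e) : UndirCycle src tgt where
  n := n
  vtx j := f j.val
  edge j := if j.val < n then x j.val else e
  vtx_inj j k h :=
    ZMod.val_injective _ (hf (Nat.lt_succ_iff.1 j.val_lt) (Nat.lt_succ_iff.1 k.val_lt) h)
  edge_inj j k h := by
    have hj := j.val_lt
    have hk := k.val_lt
    apply ZMod.val_injective
    dsimp only at h
    split_ifs at h with hj' hk' hk'
    · exact injOn_of_joins hf hx hj' hk' h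
    · exact absurd h (hxe _ hj')
    · exact absurd h.symm (hxe _ hk')
    · omega
  edge_ends j := by
    change Joins src tgt _ _ _
    rw [ZMod.val_add_one_eq_ite]
    split_ifs with hj
    · exact hx _ hj
    · rw [show j.val = n by have := j.val_lt; omega, hn, h₀]
      exact Or.inr ⟨rfl, rfl⟩

variable (src tgt) in
def graphWithoutEdge (e : E) : SimpleGraph V where
  Adj a b := a ≠ b ∧ ∃ x ≠ e, Joins src tgt x a b
  symm := ⟨fun _ _ ⟨hab, x, hxe, hx⟩ => ⟨hab.symm, x, hxe, hx.symm⟩⟩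
  loopless := ⟨fun _ h => h.1 rfl⟩

lemma not_reachable_graphWithoutEdge [IsEmpty (UndirCycle src tgt)] (e : E) :
    ¬ (graphWithoutEdge src tgt e).Reachable (src e) (tgt e) := by
  classical
  rintro ⟨p⟩
  set q := p.toPath.1
  have hadj (i : ℕ) (hi : i < q.length) :
      ∃ x, x ≠ e ∧ Joins src tgt x (q.getVert i) (q.getVert (i + 1)) :=
    (q.adj_getVert_succ hi).2
  have : Nonempty E := ⟨e⟩
  choose! x hxe hx using hadj
  exact isEmptyElim (UndirCycle.ofPath e q.length q.getVert p.toPath.2.getVert_injOn x hxe hx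
    q.getVert_zero q.getVert_length)

end Cycles

section Incidence

variable {V E R : Type} [CommRing R] {src tgt : E → V}

lemma esymmOf_one (s : Finset E) : esymmOf R s 1 = ∑ x ∈ s, X x := by
  simp [esymmOf, Finset.powersetCard_one, Finset.sum_map]

lemma esymmOf_mem_span_X (s : Finset E) {l : ℕ} (hl : 1 ≤ l) :
    esymmOf R s l ∈ Ideal.span (Set.range X) := by
  refine Ideal.sum_mem _ fun t ht => ?_
  obtain ⟨x, hx⟩ : t.Nonempty := Finset.card_pos.1 ((Finset.mem_powersetCard.1 ht).2 ▸ hl)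
  classical
  rw [← Finset.mul_prod_erase t _ hx]
  exact Ideal.mul_mem_right _ _ (Ideal.subset_span ⟨x, rfl⟩)

variable [Fintype E] [DecidableEq V]

lemma incidenceIdeal_le_span_X : incidenceIdeal R src tgt ≤ Ideal.span (Set.range X) := by
  rw [incidenceIdeal, Ideal.span_le]
  rintro _ ⟨v, l, hl, rfl⟩
  exact sub_mem (esymmOf_mem_span_X _ hl) (esymmOf_mem_span_X _ hl)

lemma sum_incidence_one (A : Finset V) :
    ∑ v ∈ A, (esymmOf R {x | src x = v} 1 - esymmOf R {x | tgt x = v} 1) =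
      ∑ x, ((if src x ∈ A then X x else 0) - if tgt x ∈ A then X x else 0) := by
  simp only [esymmOf_one, Finset.sum_filter, ← Finset.sum_sub_distrib]
  rw [Finset.sum_comm]
  refine Finset.sum_congr rfl fun x _ => ?_
  rw [Finset.sum_sub_distrib, Finset.sum_ite_eq, Finset.sum_ite_eq]

lemma X_mem_incidenceIdeal_of_cut (A : Finset V) (e : E) (hsrc : src e ∈ A) (htgt : tgt e ∉ A)
    (hcut : ∀ x ≠ e, src x ∈ A ↔ tgt x ∈ A) : X e ∈ incidenceIdeal R src tgt := by
  have hsum : ∑ v ∈ A, (esymmOf R {x | src x = v} 1 - esymmOf R {x | tgt x = v} 1) = X e := by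
    rw [sum_incidence_one, Finset.sum_eq_single e, if_pos hsrc, if_neg htgt, sub_zero]
    · intro x _ hx
      simp only [hcut x hx, sub_self]
    · simp
  rw [← hsum]
  exact Ideal.sum_mem _ fun v _ => Ideal.subset_span ⟨v, 1, le_rfl, rfl⟩

lemma X_mem_incidenceIdeal [Fintype V] [IsEmpty (UndirCycle src tgt)] (e : E) :
    X e ∈ incidenceIdeal R src tgt := by
  classical
  refine X_mem_incidenceIdeal_of_cut {v | (graphWithoutEdge src tgt e).Reachable (src e) v} e
    (by simp) (by simpa using not_reachable_graphWithoutEdge e) fun x hx => ?_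
  simp only [Finset.mem_filter, Finset.mem_univ, true_and]
  by_cases hst : src x = tgt x
  · rw [hst]
  · have hadj : (graphWithoutEdge src tgt e).Adj (src x) (tgt x) :=
      ⟨hst, x, hx, Or.inl ⟨rfl, rfl⟩⟩
    exact ⟨fun h => h.trans hadj.reachable, fun h => h.trans hadj.symm.reachable⟩

end Incidence

section Circulation

open TrivSqZeroExt

variable {V E R : Type} [CommRing R] {src tgt : E → V}

lemma aeval_inr_esymmOf_of_two_le (φ : E → R) (s : Finset E) {l : ℕ} (hl : 2 ≤ l) :
    aeval (fun x => inr (φ x) : E → DualNumber R) (esymmOf R s l) = 0 := by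
  classical
  rw [esymmOf, map_sum]
  refine Finset.sum_eq_zero fun t ht => ?_
  obtain ⟨a, ha, b, hb, hab⟩ :=
    Finset.one_lt_card.1 (by rw [(Finset.mem_powersetCard.1 ht).2]; omega)
  rw [map_prod, ← Finset.mul_prod_erase t _ ha,
    ← Finset.mul_prod_erase _ _ (Finset.mem_erase.2 ⟨hab.symm, hb⟩), ← mul_assoc, aeval_X,
    aeval_X, inr_mul_inr, zero_mul]

lemma aeval_inr_esymmOf_one (φ : E → R) (s : Finset E) :
    aeval (fun x => inr (φ x) : E → DualNumber R) (esymmOf R s 1) = inr (∑ x ∈ s, φ x) := by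
  simp only [esymmOf_one, map_sum, aeval_X, inr_sum]

variable [Fintype E] [DecidableEq V]

variable (src tgt) in
def IsCirculation (φ : E → R) : Prop :=
  ∀ v, ∑ x with src x = v, φ x = ∑ x with tgt x = v, φ x

lemma incidenceIdeal_le_ker_aeval_inr {φ : E → R} (hφ : IsCirculation src tgt φ) :
    incidenceIdeal R src tgt ≤ RingHom.ker (aeval (fun x => inr (φ x) : E → DualNumber R)) := by
  rw [incidenceIdeal, Ideal.span_le]
  rintro _ ⟨v, l, hl, rfl⟩
  rw [SetLike.mem_coe, RingHom.mem_ker, map_sub]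
  rcases hl.eq_or_lt with rfl | hl
  · rw [aeval_inr_esymmOf_one, aeval_inr_esymmOf_one, hφ v, sub_self]
  · rw [aeval_inr_esymmOf_of_two_le _ _ hl, aeval_inr_esymmOf_of_two_le _ _ hl, sub_self]

end Circulation

namespace UndirCycle

open TrivSqZeroExt

variable {V E R : Type} [CommRing R] {src tgt : E → V} [DecidableEq V] (c : UndirCycle src tgt)

variable (R) in
def sign (i : ZMod (c.n + 1)) : R := if src (c.edge i) = c.vtx i then 1 else -1

lemma sign_mul_incidence (i : ZMod (c.n + 1)) (v : V) :
    ((if src (c.edge i) = v then c.sign R i else 0) - if tgt (c.edge i) = v then c.sign R i else 0)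
      = (if c.vtx i = v then 1 else 0) - if c.vtx (i + 1) = v then 1 else 0 := by
  rcases c.edge_ends i with ⟨hs, ht⟩ | ⟨hs, ht⟩
  · simp [sign, hs, ht]
  · by_cases hloop : c.vtx (i + 1) = c.vtx i
    · simp [hs, ht, hloop]
    · have hsign : c.sign R i = -1 := if_neg (hs ▸ hloop)
      rw [hsign, hs, ht]
      split_ifs <;> simp_all

variable [DecidableEq E]

variable (R) in
def flow (x : E) : R := ∑ i, if c.edge i = x then c.sign R i else 0

lemma flow_edge (i : ZMod (c.n + 1)) : c.flow R (c.edge i) = c.sign R i := by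
  simp [flow, c.edge_inj.eq_iff]

variable [Fintype E]

lemma sum_flow_filter (P : E → Prop) [DecidablePred P] :
    ∑ x with P x, c.flow R x = ∑ i, if P (c.edge i) then c.sign R i else 0 := by
  simp only [flow]
  rw [Finset.sum_comm]
  simp [Finset.sum_ite_eq]

lemma isCirculation_flow : IsCirculation src tgt (c.flow R) := by
  intro v
  rw [c.sum_flow_filter, c.sum_flow_filter, ← sub_eq_zero, ← Finset.sum_sub_distrib]
  simp only [sign_mul_incidence, Finset.sum_sub_distrib]
  exact sub_eq_zero.2 (Equiv.sum_comp (Equiv.addRight 1) _).symm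

lemma X_edge_notMem_incidenceIdeal [Nontrivial R] (i : ZMod (c.n + 1)) :
    X (c.edge i) ∉ incidenceIdeal R src tgt := by
  intro h
  have h₀ := congrArg snd (incidenceIdeal_le_ker_aeval_inr (c.isCirculation_flow (R := R)) h)
  rw [aeval_X, flow_edge, snd_inr, snd_zero, sign] at h₀
  split_ifs at h₀ <;> simp at h₀

end UndirCycle

theorem stmt13 {V E : Type} [Fintype V] [Fintype E] [DecidableEq V] [DecidableEq E]
    (src tgt : E → V) :
    IsEmpty (UndirCycle src tgt) ↔
      incidenceIdeal ℤ src tgt = Ideal.span (Set.range (X : E → MvPolynomial E ℤ)) := by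
  refine ⟨fun _ => le_antisymm incidenceIdeal_le_span_X ?_, fun h => ⟨fun c => ?_⟩⟩
  · exact Ideal.span_le.2 (Set.range_subset_iff.2 X_mem_incidenceIdeal)
  · exact c.X_edge_notMem_incidenceIdeal 0 (h ▸ Ideal.subset_span (Set.mem_range_self _))
end

section
/- Let G be a directed graph, v a vertex of G, and E(v) the set of edges of G incident at v. Let N be the subgroup of the free abelian group ℤ^{E(G)} generated by the vectors δ_{u,1} = (sum of the standard basis vectors of the edges with initial vertex u) − (sum of the standard basis vectors of the edges with terminal vertex u), for u ∈ V(G); let ℤ·E(v) ⊆ ℤ^{E(G)} be the subgroup generated by the standard basis vectors of the edges in E(v); and let A_1(v) = ℤ·E(v)/(N ∩ ℤ·E(v)) (this is the degree-1 homogeneous component of ℤ[E(v)]/(I(G) ∩ ℤ[E(v)])). Then: (1) there is an undirected cycle in G containing v if and only if A_1(v) ≠ 0; (2) α_undirected(G, v) ≤ rank A_1(v) ≤ β_undirected(G, v), where rank A_1(v) = dim_ℚ(ℚ ⊗_ℤ A_1(v)). -/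
open MvPolynomial

/-- The degree-one incidence vector `δ_{v,1} ∈ ℤ^E` of a vertex `v`:
(sum of the basis vectors of edges with initial vertex `v`) minus
(sum of the basis vectors of edges with terminal vertex `v`).
The contributions of a loop at `v` cancel. -/
def deltaVec {V E : Type} [DecidableEq V] (src tgt : E → V) (v : V) : E → ℤ :=
  fun x => (if src x = v then 1 else 0) - (if tgt x = v then 1 else 0)

open TensorProduct

/-- `α_undirected(G, v)`: the maximal number of pairwise edge-disjoint undirected cycles,
each of which contains the vertex `v`. -/
noncomputable def uCyclePackingAt {V E : Type} (src tgt : E → V) (v : V) : ℕ :=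
  sSup {k | ∃ f : Fin k → UndirCycle src tgt, (∀ i, v ∈ Set.range (f i).vtx) ∧
    ∀ i j, i ≠ j → Disjoint (Set.range (f i).edge) (Set.range (f j).edge)}

/-- `β_undirected(G, v)`: the minimal number of edges incident at `v` whose removal
destroys all undirected cycles containing `v`. -/
noncomputable def uCyclomaticAt {V E : Type} [Fintype E] (src tgt : E → V) (v : V) : ℕ :=
  sInf {k | ∃ S : Finset E, (∀ x ∈ S, src x = v ∨ tgt x = v) ∧ S.card = k ∧
    ∀ c : UndirCycle src tgt, v ∈ Set.range c.vtx → ∃ x ∈ S, x ∈ Set.range c.edge}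

/-- The subgroup `ℤ·E(v)` of `ℤ^E` generated by the basis vectors of edges incident
at `v`. -/
def edgeSpanAt {V E : Type} [DecidableEq E] (src tgt : E → V) (v : V) :
    Submodule ℤ (E → ℤ) :=
  Submodule.span ℤ {f | ∃ x : E, (src x = v ∨ tgt x = v) ∧ f = Pi.single x (1 : ℤ)}

/-- `A_1(v) = ℤ·E(v) / (N ∩ ℤ·E(v))`, where `N` is generated by the vectors `δ_{u,1}`. -/
noncomputable abbrev A1 {V E : Type} [DecidableEq V] [DecidableEq E]
    (src tgt : E → V) (v : V) :=
  edgeSpanAt src tgt v ⧸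
    (Submodule.comap (edgeSpanAt src tgt v).subtype
      (Submodule.span ℤ (Set.range (deltaVec src tgt))))

set_option linter.unusedSectionVars false

variable {V E : Type} [Fintype V] [Fintype E] [DecidableEq V] [DecidableEq E]
  (src tgt : E → V)

/-- dot product with a fixed vector, as a linear map. -/
def dotL (z : E → ℤ) : (E → ℤ) →ₗ[ℤ] ℤ where
  toFun f := ∑ x, f x * z x
  map_add' f g := by simp [add_mul, Finset.sum_add_distrib]
  map_smul' c f := by simp [Finset.mul_sum, mul_assoc]

@[simp] lemma dotL_single (z : E → ℤ) (x : E) : dotL z (Pi.single x 1) = z x := by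
  simp [dotL, Pi.single_apply]

variable {src tgt}

def csign (c : UndirCycle src tgt) (i : ZMod (c.n + 1)) : ℤ :=
  if src (c.edge i) = c.vtx i ∧ tgt (c.edge i) = c.vtx (i + 1) then 1 else -1

/-- The signed incidence vector of a cycle. -/
def zvec (c : UndirCycle src tgt) : E → ℤ :=
  fun x => ∑ i, if c.edge i = x then csign c i else 0

lemma zvec_of_edge (c : UndirCycle src tgt) (i : ZMod (c.n + 1)) :
    zvec c (c.edge i) = csign c i := by
  rw [zvec, Finset.sum_eq_single i]
  · simp
  · intro j _ hj
    rw [if_neg (fun h => hj (c.edge_inj h))]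
  · simp

lemma zvec_of_not_edge (c : UndirCycle src tgt) (x : E)
    (hx : x ∉ Set.range c.edge) : zvec c x = 0 := by
  rw [zvec]
  refine Finset.sum_eq_zero fun i _ => ?_
  simp only [ite_eq_right_iff]
  intro h; exact absurd ⟨i, h⟩ hx

lemma dot_zvec (c : UndirCycle src tgt) (f : E → ℤ) :
    dotL (zvec c) f = ∑ i, f (c.edge i) * csign c i := by
  show (∑ x, f x * zvec c x) = _
  have h1 : ∀ x, f x * zvec c x = ∑ i, if c.edge i = x then f x * csign c i else 0 := by
    intro x
    rw [zvec, Finset.mul_sum]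
    exact Finset.sum_congr rfl fun i _ => by split <;> simp
  calc ∑ x, f x * zvec c x
      = ∑ x, ∑ i, (if c.edge i = x then f x * csign c i else 0) :=
        Finset.sum_congr rfl fun x _ => h1 x
    _ = ∑ i, ∑ x, (if c.edge i = x then f x * csign c i else 0) := Finset.sum_comm
    _ = ∑ i, f (c.edge i) * csign c i := Finset.sum_congr rfl fun i _ => by simp

lemma dot_zvec_delta (c : UndirCycle src tgt) (u : V) :
    dotL (zvec c) (deltaVec src tgt u) = 0 := by
  rw [dot_zvec]
  have key : ∀ i, deltaVec src tgt u (c.edge i) * csign c i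
      = (if c.vtx i = u then 1 else 0) - (if c.vtx (i+1) = u then 1 else 0) := by
    intro i
    rcases c.edge_ends i with ⟨h1, h2⟩ | ⟨h1, h2⟩
    · rw [csign, if_pos ⟨h1, h2⟩, deltaVec, h1, h2, mul_one]
    · by_cases hfwd : src (c.edge i) = c.vtx i ∧ tgt (c.edge i) = c.vtx (i + 1)
      · rw [csign, if_pos hfwd, deltaVec, hfwd.1, hfwd.2, mul_one]
      · rw [csign, if_neg hfwd, deltaVec, h1, h2, mul_neg_one]
        ring
  rw [Finset.sum_congr rfl fun i _ => key i]
  rw [Finset.sum_sub_distrib, sub_eq_zero]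
  exact (Fintype.sum_equiv (Equiv.addRight (1 : ZMod (c.n+1)))
    (fun i => if c.vtx (i+1) = u then (1:ℤ) else 0)
    (fun i => if c.vtx i = u then (1:ℤ) else 0) (fun i => rfl)).symm

lemma N_le_ker (c : UndirCycle src tgt) :
    Submodule.span ℤ (Set.range (deltaVec src tgt)) ≤ LinearMap.ker (dotL (zvec c)) := by
  rw [Submodule.span_le]
  rintro _ ⟨u, rfl⟩
  exact dot_zvec_delta c u


section Path

variable {V E : Type} [DecidableEq V] [DecidableEq E]

structure PathData (src tgt : E → V) (x : E) (a b : V) where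
  m : ℕ
  vt : Fin (m + 1) → V
  ed : Fin m → E
  hv0 : vt 0 = a
  hvl : vt (Fin.last m) = b
  hinj : Function.Injective vt
  hed : ∀ i : Fin m, ed i ≠ x ∧
    ((src (ed i) = vt i.castSucc ∧ tgt (ed i) = vt i.succ) ∨
     (src (ed i) = vt i.succ ∧ tgt (ed i) = vt i.castSucc))

variable {src tgt : E → V}

lemma exists_path (x : E) {a b : V}
    (h : Relation.ReflTransGen
      (fun p q => ∃ y, y ≠ x ∧ ((src y = p ∧ tgt y = q) ∨ (src y = q ∧ tgt y = p))) a b) :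
    Nonempty (PathData src tgt x a b) := by
  induction h with
  | refl =>
    exact ⟨⟨0, fun _ => a, Fin.elim0, rfl, rfl,
      fun i j _ => Fin.ext (by omega), fun i => i.elim0⟩⟩
  | @tail b c hab hbc ih =>
    obtain ⟨P⟩ := ih
    obtain ⟨y, hyx, hy⟩ := hbc
    by_cases hc : ∃ j : Fin (P.m + 1), P.vt j = c
    · obtain ⟨j, hj⟩ := hc
      have hle : j.1 + 1 ≤ P.m + 1 := j.2
      have hle' : j.1 ≤ P.m := Nat.lt_succ_iff.mp j.2
      refine ⟨⟨j.1, fun k => P.vt (Fin.castLE hle k), fun k => P.ed (Fin.castLE hle' k),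
        ?_, ?_, ?_, ?_⟩⟩
      · show P.vt (Fin.castLE hle 0) = a
        rw [show Fin.castLE hle (0 : Fin (j.1+1)) = (0 : Fin (P.m+1)) from Fin.ext rfl]
        exact P.hv0
      · show P.vt (Fin.castLE hle (Fin.last j.1)) = c
        rw [show Fin.castLE hle (Fin.last j.1) = j from Fin.ext rfl]
        exact hj
      · exact P.hinj.comp (Fin.castLE_injective hle)
      · intro k
        have h1 : (Fin.castLE hle' k).castSucc = Fin.castLE hle k.castSucc := Fin.ext rfl
        have h2 : (Fin.castLE hle' k).succ = Fin.castLE hle k.succ := Fin.ext rfl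
        have := P.hed (Fin.castLE hle' k)
        rw [h1, h2] at this
        exact this
    · refine ⟨⟨P.m + 1, Fin.snoc P.vt c, Fin.snoc P.ed y, ?_, ?_, ?_, ?_⟩⟩
      · rw [show (0 : Fin (P.m+2)) = Fin.castSucc 0 from Fin.ext rfl, Fin.snoc_castSucc]
        exact P.hv0
      · exact Fin.snoc_last ..
      · intro i j hij
        rcases Fin.eq_castSucc_or_eq_last i with ⟨i', rfl⟩ | rfl <;>
          rcases Fin.eq_castSucc_or_eq_last j with ⟨j', rfl⟩ | rfl
        · rw [Fin.snoc_castSucc, Fin.snoc_castSucc] at hij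
          exact congrArg _ (P.hinj hij)
        · rw [Fin.snoc_castSucc, Fin.snoc_last] at hij
          exact absurd ⟨i', hij⟩ hc
        · rw [Fin.snoc_last, Fin.snoc_castSucc] at hij
          exact absurd ⟨j', hij.symm⟩ hc
        · rfl
      · intro i
        rcases Fin.eq_castSucc_or_eq_last i with ⟨k, rfl⟩ | rfl
        · have h1 : (Fin.castSucc k).castSucc = Fin.castSucc k.castSucc := rfl
          have h2 : (Fin.castSucc k).succ = Fin.castSucc k.succ := Fin.succ_castSucc ..
          rw [Fin.snoc_castSucc, h1, h2, Fin.snoc_castSucc, Fin.snoc_castSucc]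
          exact P.hed k
        · have h1 : (Fin.last P.m).castSucc = Fin.castSucc (Fin.last P.m) := rfl
          have h2 : (Fin.last P.m).succ = Fin.last (P.m + 1) := rfl
          rw [Fin.snoc_last, h1, h2, Fin.snoc_castSucc, Fin.snoc_last, P.hvl]
          exact ⟨hyx, hy⟩

lemma PathData.ed_inj {x : E} {a b : V} (P : PathData src tgt x a b) :
    Function.Injective P.ed := by
  intro i j hij
  have hi := (P.hed i).2
  have hj := (P.hed j).2
  rw [hij] at hi
  have key : ∀ p q : Fin P.m, P.vt p.castSucc = P.vt q.castSucc → p = q := by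
    intro p q h
    exact Fin.castSucc_injective _ (P.hinj h)
  rcases hi with ⟨hs, ht⟩ | ⟨hs, ht⟩ <;> rcases hj with ⟨hs', ht'⟩ | ⟨hs', ht'⟩
  · exact key i j (hs.symm.trans hs')
  · -- forward i, backward j : vt i.castSucc = vt j.succ, vt i.succ = vt j.castSucc
    have e1 := P.hinj (hs.symm.trans hs')
    have e2 := P.hinj (ht.symm.trans ht')
    have v1 : (i.castSucc : Fin (P.m+1)).1 = j.succ.1 := congrArg Fin.val e1
    have v2 : (i.succ : Fin (P.m+1)).1 = j.castSucc.1 := congrArg Fin.val e2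
    simp only [Fin.coe_castSucc, Fin.val_succ] at v1 v2
    omega
  · have e1 := P.hinj (hs.symm.trans hs')
    have e2 := P.hinj (ht.symm.trans ht')
    have v1 : (i.succ : Fin (P.m+1)).1 = j.castSucc.1 := congrArg Fin.val e1
    have v2 : (i.castSucc : Fin (P.m+1)).1 = j.succ.1 := congrArg Fin.val e2
    simp only [Fin.coe_castSucc, Fin.val_succ] at v1 v2
    omega
  · exact key i j (ht.symm.trans ht')

end Path

section Bridge

variable {V E : Type} [Fintype V] [Fintype E] [DecidableEq V] [DecidableEq E]
  {src tgt : E → V}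

lemma zmod_val_add_one {m : ℕ} (i : ZMod (m + 1)) :
    (i + 1).val = (i.val + 1) % (m + 1) :=
  calc (i + 1).val = (i.val + 1 % (m + 1)) % (m + 1) := by
        rw [ZMod.val_add, ZMod.val_one_eq_one_mod]
    _ = (i.val % (m + 1) + 1 % (m + 1)) % (m + 1) := by
        rw [Nat.mod_eq_of_lt (ZMod.val_lt i)]
    _ = (i.val + 1) % (m + 1) := (Nat.add_mod _ _ _).symm

/-- From a simple path from `tgt x` to `src x` avoiding `x`, build a cycle containing `x`. -/
lemma cycle_of_path (x : E) (P : PathData src tgt x (tgt x) (src x)) :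
    ∃ c : UndirCycle src tgt, x ∈ Set.range c.edge := by
  have hvlt : ∀ i : ZMod (P.m + 1), i.val < P.m + 1 := fun i => ZMod.val_lt i
  refine ⟨⟨P.m, fun i => P.vt ⟨i.val, hvlt i⟩,
    fun i => if h : i.val < P.m then P.ed ⟨i.val, h⟩ else x, ?_, ?_, ?_⟩, ?_⟩
  · intro i j hij
    have := P.hinj hij
    exact ZMod.val_injective _ (Fin.mk.inj this)
  · intro i j hij
    dsimp only at hij
    by_cases hi : i.val < P.m <;> by_cases hj : j.val < P.m
    · rw [dif_pos hi, dif_pos hj] at hij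
      have := P.ed_inj hij
      exact ZMod.val_injective _ (Fin.mk.inj this)
    · rw [dif_pos hi, dif_neg hj] at hij
      exact absurd hij (P.hed _).1
    · rw [dif_neg hi, dif_pos hj] at hij
      exact absurd hij.symm (P.hed _).1
    · rw [dif_neg hi, dif_neg hj] at hij
      have h1 : i.val = P.m := by have := hvlt i; omega
      have h2 : j.val = P.m := by have := hvlt j; omega
      exact ZMod.val_injective _ (h1.trans h2.symm)
  · intro i
    by_cases hi : i.val < P.m
    · rw [dif_pos hi]
      have hnext : (i + 1).val = i.val + 1 := by
        rw [zmod_val_add_one, Nat.mod_eq_of_lt (by omega)]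
      have h1 : (⟨i.val, hi⟩ : Fin P.m).castSucc = ⟨i.val, hvlt i⟩ := Fin.ext rfl
      have h2 : (⟨i.val, hi⟩ : Fin P.m).succ = ⟨(i + 1).val, hvlt (i + 1)⟩ := by
        apply Fin.ext
        simp [hnext]
      have := P.hed (⟨i.val, hi⟩ : Fin P.m)
      rw [h1, h2] at this
      exact this.2
    · rw [dif_neg hi]
      have h1 : i.val = P.m := by have := hvlt i; omega
      have hnext : (i + 1).val = 0 := by
        rw [zmod_val_add_one, h1, Nat.mod_self]
      left
      constructor
      · have : (⟨i.val, hvlt i⟩ : Fin (P.m + 1)) = Fin.last P.m := Fin.ext h1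
        rw [this, P.hvl]
      · have : (⟨(i + 1).val, hvlt (i + 1)⟩ : Fin (P.m + 1)) = 0 := Fin.ext hnext
        rw [this, P.hv0]
  · refine ⟨(P.m : ZMod (P.m + 1)), ?_⟩
    have : ((P.m : ℕ) : ZMod (P.m + 1)).val = P.m := ZMod.val_cast_of_lt (by omega)
    simp only [this]
    rw [dif_neg (by omega)]

/-- If no undirected cycle contains the edge `x`, then `e_x` lies in the span of the `δ_u`. -/
lemma bridge (src tgt : E → V) (x : E)
    (h : ∀ c : UndirCycle src tgt, x ∉ Set.range c.edge) :
    Pi.single x (1 : ℤ) ∈ Submodule.span ℤ (Set.range (deltaVec src tgt)) := by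
  classical
  set adj : V → V → Prop :=
    fun p q => ∃ y, y ≠ x ∧ ((src y = p ∧ tgt y = q) ∨ (src y = q ∧ tgt y = p)) with hadj
  set U : Finset V := Finset.univ.filter
    (fun u => Relation.ReflTransGen adj (tgt x) u) with hU
  have hmemU : ∀ u, u ∈ U ↔ Relation.ReflTransGen adj (tgt x) u := by
    intro u; simp [hU]
  have htgt : tgt x ∈ U := (hmemU _).2 Relation.ReflTransGen.refl
  have hsrc : src x ∉ U := by
    intro hs
    obtain ⟨P⟩ := exists_path (src := src) (tgt := tgt) x ((hmemU _).1 hs)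
    obtain ⟨c, hc⟩ := cycle_of_path x P
    exact h c hc
  have hclosed : ∀ y : E, y ≠ x → (src y ∈ U ↔ tgt y ∈ U) := by
    intro y hy
    rw [hmemU, hmemU]
    constructor
    · intro hr; exact hr.tail ⟨y, hy, Or.inl ⟨rfl, rfl⟩⟩
    · intro hr; exact hr.tail ⟨y, hy, Or.inr ⟨rfl, rfl⟩⟩
  have hkey : (∑ u ∈ U, -(deltaVec src tgt u)) = Pi.single x (1 : ℤ) := by
    funext y
    have e1 : (∑ u ∈ U, -(deltaVec src tgt u)) y
        = (if tgt y ∈ U then (1:ℤ) else 0) - (if src y ∈ U then (1:ℤ) else 0) := by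
      rw [Finset.sum_apply]
      simp only [Pi.neg_apply, deltaVec, neg_sub]
      rw [Finset.sum_sub_distrib]
      congr 1 <;> simp [Finset.sum_ite_eq, eq_comm]
    by_cases hyx : y = x
    · subst hyx
      rw [e1, if_pos htgt, if_neg hsrc, Pi.single_eq_same]
      norm_num
    · rw [e1, Pi.single_eq_of_ne hyx]
      by_cases hsy : src y ∈ U
      · rw [if_pos ((hclosed y hyx).1 hsy), if_pos hsy, sub_self]
      · rw [if_neg (fun ht => hsy ((hclosed y hyx).2 ht)), if_neg hsy, sub_self]
  rw [← hkey]
  exact Submodule.sum_mem _ fun u _ =>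
    Submodule.neg_mem _ (Submodule.subset_span ⟨u, rfl⟩)

end Bridge


section Main

variable {V E : Type} [Fintype V] [Fintype E] [DecidableEq V] [DecidableEq E]
  {src tgt : E → V} {v : V}

lemma mem_vtx_of_incident (c : UndirCycle src tgt) (i : ZMod (c.n + 1))
    (hv : src (c.edge i) = v ∨ tgt (c.edge i) = v) : v ∈ Set.range c.vtx := by
  rcases c.edge_ends i with ⟨h1, h2⟩ | ⟨h1, h2⟩ <;> rcases hv with hv | hv
  · exact ⟨i, by rw [← h1, hv]⟩
  · exact ⟨i + 1, by rw [← h2, hv]⟩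
  · exact ⟨i + 1, by rw [← h1, hv]⟩
  · exact ⟨i, by rw [← h2, hv]⟩

lemma edge_at_incident (c : UndirCycle src tgt) (i : ZMod (c.n + 1))
    (hv : c.vtx i = v) : src (c.edge i) = v ∨ tgt (c.edge i) = v := by
  rcases c.edge_ends i with ⟨h1, h2⟩ | ⟨h1, h2⟩
  · exact Or.inl (h1.trans hv)
  · exact Or.inr (h2.trans hv)

lemma csign_ne_zero (c : UndirCycle src tgt) (i : ZMod (c.n + 1)) : csign c i ≠ 0 := by
  rw [csign]; split <;> norm_num

lemma part1 (src tgt : E → V) (v : V) :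
    (∃ c : UndirCycle src tgt, v ∈ Set.range c.vtx) ↔ Nontrivial (A1 src tgt v) := by
  constructor
  · rintro ⟨c, i, hvi⟩
    have hinc : src (c.edge i) = v ∨ tgt (c.edge i) = v := edge_at_incident c i hvi
    have hmem : Pi.single (c.edge i) (1:ℤ) ∈ edgeSpanAt src tgt v :=
      Submodule.subset_span ⟨c.edge i, hinc, rfl⟩
    refine ⟨Submodule.Quotient.mk ⟨_, hmem⟩, 0, fun habs => ?_⟩
    rw [Submodule.Quotient.mk_eq_zero] at habs
    have h0 : dotL (zvec c) (Pi.single (c.edge i) 1) = 0 := N_le_ker c habs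
    rw [dotL_single, zvec_of_edge] at h0
    exact csign_ne_zero c i h0
  · intro hnt
    by_contra hnc
    push_neg at hnc
    have WleN : edgeSpanAt src tgt v ≤ Submodule.span ℤ (Set.range (deltaVec src tgt)) := by
      rw [edgeSpanAt, Submodule.span_le]
      rintro f ⟨x, hinc, rfl⟩
      refine bridge src tgt x fun c hc => ?_
      obtain ⟨i, hei⟩ := hc
      exact hnc c (mem_vtx_of_incident c i (by rw [hei]; exact hinc))
    obtain ⟨a, b, hab⟩ := hnt
    have hz : ∀ z : A1 src tgt v, z = 0 := by
      intro z
      obtain ⟨w, rfl⟩ := Submodule.Quotient.mk_surjective _ z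
      rw [Submodule.Quotient.mk_eq_zero]
      exact WleN w.2
    exact hab ((hz a).trans (hz b).symm)

end Main


section Rank

variable {V E : Type} [Fintype V] [Fintype E] [DecidableEq V] [DecidableEq E]
  (src tgt : E → V) (v : V)

noncomputable def psiA (c : UndirCycle src tgt) : A1 src tgt v →ₗ[ℤ] ℤ :=
  Submodule.liftQ _ ((dotL (zvec c)).comp (edgeSpanAt src tgt v).subtype)
    (fun _ hw => N_le_ker c hw)

lemma psiA_mk (c : UndirCycle src tgt) (w : edgeSpanAt src tgt v) :
    psiA src tgt v c (Submodule.Quotient.mk w) = dotL (zvec c) ↑w := rfl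

noncomputable def psiQ (c : UndirCycle src tgt) : (ℚ ⊗[ℤ] A1 src tgt v) →ₗ[ℚ] ℚ :=
  LinearMap.liftBaseChange ℚ ((Algebra.linearMap ℤ ℚ).comp (psiA src tgt v c))

lemma psiQ_tmul (c : UndirCycle src tgt) (a : A1 src tgt v) :
    psiQ src tgt v c (1 ⊗ₜ a) = ((psiA src tgt v c a : ℤ) : ℚ) := by
  rw [psiQ, LinearMap.liftBaseChange_tmul]
  simp

instance : Module.Finite ℤ (A1 src tgt v) := by
  have h1 : Module.Finite ℤ (edgeSpanAt src tgt v) :=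
    Module.Finite.iff_fg.mpr (IsNoetherian.noetherian _)
  exact Module.Finite.of_surjective
    (Submodule.mkQ (Submodule.comap (edgeSpanAt src tgt v).subtype
      (Submodule.span ℤ (Set.range (deltaVec src tgt)))))
    (Submodule.mkQ_surjective _)

lemma partAlpha : uCyclePackingAt src tgt v ≤ Module.finrank ℚ (ℚ ⊗[ℤ] A1 src tgt v) := by
  refine csSup_le ⟨0, Fin.elim0, fun i => i.elim0, fun i j _ => i.elim0⟩ ?_
  rintro k ⟨f, hvf, hdisj⟩
  choose idx hidx using hvf
  set x : Fin k → E := fun j => (f j).edge (idx j) with hx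
  have hinc : ∀ j, src (x j) = v ∨ tgt (x j) = v := fun j => edge_at_incident _ _ (hidx j)
  have hmem : ∀ j, Pi.single (x j) (1:ℤ) ∈ edgeSpanAt src tgt v :=
    fun j => Submodule.subset_span ⟨x j, hinc j, rfl⟩
  set a : Fin k → ℚ ⊗[ℤ] A1 src tgt v :=
    fun j => 1 ⊗ₜ Submodule.Quotient.mk ⟨Pi.single (x j) 1, hmem j⟩ with ha
  set Φ : (ℚ ⊗[ℤ] A1 src tgt v) →ₗ[ℚ] (Fin k → ℚ) :=
    LinearMap.pi (fun j => psiQ src tgt v (f j)) with hΦ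
  have hval : ∀ i j, Φ (a i) j = ((zvec (f j) (x i) : ℤ) : ℚ) := by
    intro i j
    simp only [hΦ, ha, LinearMap.pi_apply]
    rw [psiQ_tmul, psiA_mk]
    norm_num [dotL_single]
  have key : LinearIndependent ℚ a := by
    apply LinearIndependent.of_comp Φ
    rw [Fintype.linearIndependent_iff]
    intro g hg j
    have hgj := congrFun hg j
    simp only [Function.comp_apply, Finset.sum_apply, Pi.smul_apply, smul_eq_mul,
      Pi.zero_apply] at hgj
    have hterm : ∀ i, g i * Φ (a i) j
        = if i = j then g j * ((csign (f j) (idx j) : ℤ) : ℚ) else 0 := by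
      intro i
      rw [hval i j]
      by_cases hij : i = j
      · subst hij
        rw [if_pos rfl]
        simp only [hx]
        rw [zvec_of_edge]
      · rw [if_neg hij]
        have hxnot : x i ∉ Set.range (f j).edge :=
          Set.disjoint_left.mp (hdisj i j hij) ⟨idx i, rfl⟩
        rw [zvec_of_not_edge _ _ hxnot, Int.cast_zero, mul_zero]
    rw [Finset.sum_congr rfl (fun i _ => hterm i), Finset.sum_ite_eq' Finset.univ j] at hgj
    simp only [Finset.mem_univ, if_true] at hgj
    rcases mul_eq_zero.mp hgj with h | h
    · exact h
    · exact absurd (Int.cast_injective (h.trans (Int.cast_zero).symm))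
        (csign_ne_zero (f j) (idx j))
  have := key.fintype_card_le_finrank
  simpa using this

end Rank

section Beta

variable {V E : Type} [Fintype V] [Fintype E] [DecidableEq V] [DecidableEq E]
  (src tgt : E → V) (v : V)

lemma mem_span_single_of_support (S : Finset E) (f : E → ℤ)
    (hf : ∀ y, f y ≠ 0 → y ∈ S) :
    f ∈ Submodule.span ℤ {g : E → ℤ | ∃ y ∈ S, g = Pi.single y (1 : ℤ)} := by
  have hrep : f = ∑ y ∈ S, f y • Pi.single y (1 : ℤ) := by
    funext z
    rw [Finset.sum_apply]
    have : ∀ y ∈ S, (f y • Pi.single y (1:ℤ) : E → ℤ) z = if z = y then f y else 0 := by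
      intro y _
      rw [Pi.smul_apply, Pi.single_apply]
      split <;> simp
    rw [Finset.sum_congr rfl this, Finset.sum_ite_eq]
    by_cases hz : z ∈ S
    · rw [if_pos hz]
    · rw [if_neg hz]
      by_contra hc
      exact hz (hf z hc)
  rw [hrep]
  exact Submodule.sum_mem _ fun y hy =>
    Submodule.smul_mem _ _ (Submodule.subset_span ⟨y, hy, rfl⟩)

lemma partBeta : Module.finrank ℚ (ℚ ⊗[ℤ] A1 src tgt v) ≤ uCyclomaticAt src tgt v := by
  classical
  rw [uCyclomaticAt]
  apply le_csInf
  · refine ⟨(Finset.univ.filter (fun x => src x = v ∨ tgt x = v)).card,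
      Finset.univ.filter (fun x => src x = v ∨ tgt x = v),
      fun x hx => (Finset.mem_filter.mp hx).2, rfl, ?_⟩
    rintro c ⟨i, hvi⟩
    exact ⟨c.edge i, Finset.mem_filter.mpr ⟨Finset.mem_univ _, edge_at_incident c i hvi⟩,
      ⟨i, rfl⟩⟩
  rintro k ⟨S, hSinc, rfl, hSdes⟩
  set N := Submodule.span ℤ (Set.range (deltaVec src tgt)) with hN
  set W := edgeSpanAt src tgt v with hW
  set spanS := Submodule.span ℤ {g : E → ℤ | ∃ y ∈ S, g = Pi.single y (1 : ℤ)} with hspanS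
  have spanSleW : spanS ≤ W := by
    rw [hspanS, hW, edgeSpanAt, Submodule.span_le]
    rintro g ⟨y, hy, rfl⟩
    exact Submodule.subset_span ⟨y, hSinc y hy, rfl⟩
  have hWle : W ≤ N ⊔ spanS := by
    rw [hW, edgeSpanAt, Submodule.span_le]
    rintro g ⟨x, hxinc, rfl⟩
    by_cases hxS : x ∈ S
    · exact Submodule.mem_sup_right (Submodule.subset_span ⟨x, hxS, rfl⟩)
    · set src' : {y : E // y ∉ S} → V := fun y => src y.1 with hsrc'
      set tgt' : {y : E // y ∉ S} → V := fun y => tgt y.1 with htgt'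
      have hnoc : ∀ c' : UndirCycle src' tgt',
          (⟨x, hxS⟩ : {y // y ∉ S}) ∉ Set.range c'.edge := by
        rintro c' ⟨i, hei⟩
        have hends : ∀ j, (src ((c'.edge j).1) = c'.vtx j ∧ tgt ((c'.edge j).1) = c'.vtx (j+1))
            ∨ (src ((c'.edge j).1) = c'.vtx (j+1) ∧ tgt ((c'.edge j).1) = c'.vtx j) :=
          fun j => c'.edge_ends j
        set c : UndirCycle src tgt :=
          ⟨c'.n, c'.vtx, fun j => (c'.edge j).1, c'.vtx_inj,
            fun p q h => c'.edge_inj (Subtype.ext h), hends⟩ with hc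
        have hvc : v ∈ Set.range c.vtx := by
          refine mem_vtx_of_incident c i ?_
          show src ((c'.edge i).1) = v ∨ tgt ((c'.edge i).1) = v
          rw [show (c'.edge i).1 = x from congrArg Subtype.val hei]
          exact hxinc
        obtain ⟨s, hsS, j, hsj⟩ := hSdes c hvc
        have : (c'.edge j).1 = s := hsj
        exact (c'.edge j).2 (this ▸ hsS)
      have hbr := bridge src' tgt' ⟨x, hxS⟩ hnoc
      set ext : ({y : E // y ∉ S} → ℤ) →ₗ[ℤ] (E → ℤ) :=
        { toFun := fun f y => if h : y ∈ S then 0 else f ⟨y, h⟩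
          map_add' := by intro f g; funext y; dsimp; split <;> simp
          map_smul' := by intro cz f; funext y; dsimp; split <;> simp } with hext
      have hextap : ∀ (f : {y : E // y ∉ S} → ℤ) (y : E),
          ext f y = if h : y ∈ S then 0 else f ⟨y, h⟩ := fun f y => rfl
      have h1 : ext (Pi.single ⟨x, hxS⟩ 1) = Pi.single x (1:ℤ) := by
        funext y
        rw [hextap]
        by_cases hy : y ∈ S
        · rw [dif_pos hy, Pi.single_apply, if_neg (by rintro rfl; exact hxS hy)]
        · rw [dif_neg hy, Pi.single_apply, Pi.single_apply]
          simp [Subtype.ext_iff]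
      have h2 : ∀ u, ext (deltaVec src' tgt' u)
          = deltaVec src tgt u - (fun y => if y ∈ S then deltaVec src tgt u y else 0) := by
        intro u
        funext y
        rw [hextap]
        by_cases hy : y ∈ S
        · rw [dif_pos hy]
          simp only [Pi.sub_apply, if_pos hy, sub_self]
        · rw [dif_neg hy]
          simp only [Pi.sub_apply, if_neg hy, sub_zero]
          rfl
      have h3 : ∀ u, (fun y => if y ∈ S then deltaVec src tgt u y else 0) ∈ spanS := by
        intro u
        refine mem_span_single_of_support S _ fun y hy => ?_
        by_contra hc
        exact hy (if_neg hc)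
      have hmap : Pi.single x (1:ℤ)
          ∈ Submodule.map ext (Submodule.span ℤ (Set.range (deltaVec src' tgt'))) :=
        ⟨_, hbr, h1⟩
      rw [Submodule.map_span] at hmap
      refine Submodule.span_le.mpr ?_ hmap
      rintro _ ⟨_, ⟨u, rfl⟩, rfl⟩
      rw [h2 u]
      exact Submodule.sub_mem _
        (Submodule.mem_sup_left (Submodule.subset_span ⟨u, rfl⟩))
        (Submodule.mem_sup_right (h3 u))
  set gZ : {y // y ∈ S} → A1 src tgt v :=
    fun y => Submodule.Quotient.mk
      ⟨Pi.single y.1 1, Submodule.subset_span ⟨y.1, hSinc y.1 y.2, rfl⟩⟩ with hgZ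
  have main : ∀ g (hg : g ∈ spanS),
      (Submodule.Quotient.mk ⟨g, spanSleW hg⟩ : A1 src tgt v)
        ∈ Submodule.span ℤ (Set.range gZ) := by
    intro g hg
    induction hg using Submodule.span_induction with
    | mem g hgmem =>
      obtain ⟨y, hy, rfl⟩ := hgmem
      exact Submodule.subset_span ⟨⟨y, hy⟩, rfl⟩
    | zero => exact Submodule.zero_mem _
    | add g1 g2 hg1 hg2 ih1 ih2 => exact Submodule.add_mem _ ih1 ih2
    | smul z g hgm ih => exact Submodule.smul_mem _ z ih
  have hZspan : ∀ z : A1 src tgt v, z ∈ Submodule.span ℤ (Set.range gZ) := by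
    intro z
    obtain ⟨w, rfl⟩ := Submodule.Quotient.mk_surjective _ z
    obtain ⟨nv, hn, s, hs, hsum⟩ := Submodule.mem_sup.mp (hWle w.2)
    have heq : (Submodule.Quotient.mk w : A1 src tgt v)
        = Submodule.Quotient.mk ⟨s, spanSleW hs⟩ := by
      rw [Submodule.Quotient.eq, Submodule.mem_comap]
      have hval : (Submodule.subtype _) (w - ⟨s, spanSleW hs⟩) = nv := by
        rw [map_sub]
        show (w : E → ℤ) - s = nv
        rw [← hsum]
        ring
      rw [hval]
      exact hn
    rw [heq]
    exact main s hs
  set gQ : {y // y ∈ S} → ℚ ⊗[ℤ] A1 src tgt v := fun y => 1 ⊗ₜ gZ y with hgQ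
  have hQspan : Submodule.span ℚ (Set.range gQ) = ⊤ := by
    rw [eq_top_iff]
    rintro z -
    induction z using TensorProduct.induction_on with
    | zero => exact Submodule.zero_mem _
    | add a b ha hb => exact Submodule.add_mem _ ha hb
    | tmul q a =>
      have ha := hZspan a
      induction ha using Submodule.span_induction with
      | mem a hamem =>
        obtain ⟨y, rfl⟩ := hamem
        have : q ⊗ₜ[ℤ] gZ y = q • gQ y := by
          rw [hgQ]
          dsimp only
          rw [TensorProduct.smul_tmul', smul_eq_mul, mul_one]
        rw [this]
        exact Submodule.smul_mem _ q (Submodule.subset_span ⟨y, rfl⟩)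
      | zero => rw [TensorProduct.tmul_zero]; exact Submodule.zero_mem _
      | add a b ha hb iha ihb =>
        rw [TensorProduct.tmul_add]; exact Submodule.add_mem _ iha ihb
      | smul z a haz ih =>
        rw [TensorProduct.tmul_smul]
        exact Submodule.smul_of_tower_mem _ z ih
  calc Module.finrank ℚ (ℚ ⊗[ℤ] A1 src tgt v)
      = Module.finrank ℚ (⊤ : Submodule ℚ (ℚ ⊗[ℤ] A1 src tgt v)) := (finrank_top ℚ _).symm
    _ = Module.finrank ℚ (Submodule.span ℚ (Set.range gQ)) := by rw [hQspan]
    _ ≤ (Set.range gQ).toFinset.card := finrank_span_le_card _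
    _ = Fintype.card (Set.range gQ) := Set.toFinset_card _
    _ ≤ Fintype.card {y // y ∈ S} := Fintype.card_range_le gQ
    _ = S.card := Fintype.card_coe S

end Beta


theorem stmt15 {V E : Type} [Fintype V] [Fintype E] [DecidableEq V] [DecidableEq E]
    (src tgt : E → V) (v : V) :
    ((∃ c : UndirCycle src tgt, v ∈ Set.range c.vtx) ↔ Nontrivial (A1 src tgt v)) ∧
      uCyclePackingAt src tgt v ≤ Module.finrank ℚ (ℚ ⊗[ℤ] A1 src tgt v) ∧
      Module.finrank ℚ (ℚ ⊗[ℤ] A1 src tgt v) ≤ uCyclomaticAt src tgt v := by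
  exact ⟨part1 src tgt v, partAlpha src tgt v, partBeta src tgt v⟩
end

section
/- Let G be an undirected graph with finite vertex set V(G) and finite edge set E(G), and let S be the ℤ₂-subspace of ℤ₂·E(G) spanned by the vectors Σ_{x ∈ E(v)∖L(v)} x for v ∈ V(G). Then: (1) α_undirected(G) ≤ |E(G)| − dim_{ℤ₂} S ≤ β_undirected(G); in particular, |E(G)| > dim_{ℤ₂} S if and only if G contains an undirected cycle. (2) For every vertex v, α_undirected(G, v) ≤ |E(v)| − dim_{ℤ₂}((ℤ₂·E(v)) ∩ S) ≤ β_undirected(G, v), where ℤ₂·E(v) is the subspace of ℤ₂·E(G) spanned by E(v); in particular, |E(v)| > dim_{ℤ₂}((ℤ₂·E(v)) ∩ S) if and only if there is an undirected cycle in G containing v. -/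
open MvPolynomial

/-- An undirected cycle in the undirected graph with edge-endpoints map
`ends : E → Sym2 V`: pairwise distinct vertices `v_0, …, v_n` and pairwise distinct
edges `x_0, …, x_n` such that `x_i` joins `v_i` and `v_{i+1}` (indices mod `n+1`). -/
structure UCycle {V E : Type} (ends : E → Sym2 V) where
  n : ℕ
  vtx : ZMod (n + 1) → V
  edge : ZMod (n + 1) → E
  vtx_inj : Function.Injective vtx
  edge_inj : Function.Injective edge
  edge_ends : ∀ i, ends (edge i) = s(vtx i, vtx (i + 1))

/-- The vector `Σ_{x ∈ E(v) \ L(v)} x` of `ℤ₂·E(G)`: the sum of the basis vectors of the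
non-loop edges incident at `v`. -/
def vertexVec {V E : Type} [DecidableEq V] (ends : E → Sym2 V) (v : V) : E → ZMod 2 :=
  fun x => if v ∈ ends x ∧ ends x ≠ s(v, v) then 1 else 0

/-- `α_undirected(G)` for an undirected graph. -/
noncomputable def uPacking {V E : Type} (ends : E → Sym2 V) : ℕ :=
  sSup {k | ∃ f : Fin k → UCycle ends,
    ∀ i j, i ≠ j → Disjoint (Set.range (f i).edge) (Set.range (f j).edge)}

/-- `β_undirected(G)` for an undirected graph. -/
noncomputable def uCutNumber {V E : Type} [Fintype E] (ends : E → Sym2 V) : ℕ :=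
  sInf {k | ∃ S : Finset E, S.card = k ∧ ∀ c : UCycle ends, ∃ x ∈ S, x ∈ Set.range c.edge}

/-- `α_undirected(G, v)` for an undirected graph. -/
noncomputable def uPackingAt {V E : Type} (ends : E → Sym2 V) (v : V) : ℕ :=
  sSup {k | ∃ f : Fin k → UCycle ends, (∀ i, v ∈ Set.range (f i).vtx) ∧
    ∀ i j, i ≠ j → Disjoint (Set.range (f i).edge) (Set.range (f j).edge)}

/-- `β_undirected(G, v)` for an undirected graph. -/
noncomputable def uCutNumberAt {V E : Type} [Fintype E] [DecidableEq V]
    (ends : E → Sym2 V) (v : V) : ℕ :=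
  sInf {k | ∃ S : Finset E, (∀ x ∈ S, v ∈ ends x) ∧ S.card = k ∧
    ∀ c : UCycle ends, v ∈ Set.range c.vtx → ∃ x ∈ S, x ∈ Set.range c.edge}

/-!
Work in `ZMod 2 ^ E` with the dot product and let `K` be the orthogonal complement of `S`. A
vector `f` lies in `K` iff every vertex meets an even number of non-loop edges of its support, so
`K` is the cycle space, of dimension `|E| - dim S`. Indicator vectors of cycles lie in `K`;
conversely every edge in the support of some `f ∈ K` lies on a cycle inside that support: a walk in
the support that never turns back along the same edge closes a cycle at its first repeated vertex,
and peeling such cycles off `f` reaches the given edge. Hence pairwise edge-disjoint cycles give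
linearly independent vectors of `K`, while restricting `K` to an edge set that meets every cycle is
injective. The local statement is the same argument for the image `K_v` of `K` under restriction to
the edges at `v`; its dimension is `|E(v)| - dim (ℤ₂·E(v) ∩ S)` by rank–nullity, since the kernel
of the restriction on `K` is the orthogonal complement of `S + ℤ₂·E(v)`.
-/

open Module Submodule

namespace LinearMap.BilinForm

variable {R M : Type*} [CommSemiring R] [AddCommMonoid M] [Module R M]
  (B : LinearMap.BilinForm R M)

theorem mem_orthogonal_span_iff {s : Set M} {m : M} :
    m ∈ B.orthogonal (span R s) ↔ ∀ n ∈ s, B n m = 0 := by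
  rw [mem_orthogonal_iff]
  exact ⟨fun h n hn => h n (subset_span hn),
    fun h n hn => (span_le (p := ker (B.flip m))).2 h hn⟩

theorem orthogonal_sup (W₁ W₂ : Submodule R M) :
    B.orthogonal (W₁ ⊔ W₂) = B.orthogonal W₁ ⊓ B.orthogonal W₂ := by
  ext m
  simp only [mem_inf, mem_orthogonal_iff]
  refine ⟨fun h => ⟨fun n hn => h n (mem_sup_left hn), fun n hn => h n (mem_sup_right hn)⟩, ?_⟩
  rintro ⟨h₁, h₂⟩ n hn
  obtain ⟨n₁, hn₁, n₂, hn₂, rfl⟩ := mem_sup.1 hn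
  rw [map_add, LinearMap.add_apply, h₁ n₁ hn₁, h₂ n₂ hn₂, add_zero]

end LinearMap.BilinForm

theorem Submodule.finrank_map_add_finrank_inf_ker {K V V₂ : Type*} [DivisionRing K]
    [AddCommGroup V] [Module K V] [AddCommGroup V₂] [Module K V₂] [FiniteDimensional K V]
    (f : V →ₗ[K] V₂) (W : Submodule K V) :
    finrank K (W.map f) + finrank K ↥(W ⊓ LinearMap.ker f) = finrank K W := by
  have h := LinearMap.finrank_range_add_finrank_ker (f.domRestrict W)
  rw [LinearMap.range_domRestrict, LinearMap.ker_domRestrict] at h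
  rwa [← (comapSubtypeEquivOfLe (inf_le_left : W ⊓ LinearMap.ker f ≤ W)).finrank_eq, comap_inf,
    comap_subtype_self, top_inf_eq]

section DotProduct

variable {F ι : Type*} [Field F] [Fintype ι]

theorem nondegenerate_dotProductBilin [DecidableEq ι] :
    LinearMap.BilinForm.Nondegenerate (dotProductBilin F F : LinearMap.BilinForm F (ι → F)) := by
  refine ⟨fun f hf => funext fun x => ?_, fun f hf => funext fun x => ?_⟩
  · simpa using hf (Pi.single x 1)
  · simpa using hf (Pi.single x 1)

theorem mem_orthogonal_span_dotProduct_iff {s : Set (ι → F)} {f : ι → F} :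
    f ∈ LinearMap.BilinForm.orthogonal (dotProductBilin F F) (span F s) ↔ ∀ g ∈ s, g ⬝ᵥ f = 0 :=
  LinearMap.BilinForm.mem_orthogonal_span_iff _

end DotProduct

section Counting

variable {F ι : Type*} [Field F] [Fintype ι]

theorem card_le_finrank_of_diagonal {κ : Type*} [Fintype κ] (W : Submodule F (ι → F))
    (g : κ → ι → F) (hg : ∀ i, g i ∈ W) (e : κ → ι) (hdiag : ∀ i, g i (e i) ≠ 0)
    (hoff : ∀ i j, i ≠ j → g j (e i) = 0) : Fintype.card κ ≤ finrank F W := by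
  classical
  have hli : LinearIndependent F g := by
    refine Fintype.linearIndependent_iff.2 fun a ha i => ?_
    have hi := congrFun ha (e i)
    rw [Finset.sum_apply, Finset.sum_eq_single i (fun j _ hji => by simp [hoff i j hji.symm])
      (by simp)] at hi
    simpa [hdiag i] using hi
  have hliW : LinearIndependent F fun i => (⟨g i, hg i⟩ : W) :=
    LinearIndependent.of_comp W.subtype hli
  exact hliW.fintype_card_le_finrank

theorem finrank_le_card_of_vanishing_on (W : Submodule F (ι → F)) (T : Finset ι)
    (hT : ∀ w ∈ W, (∀ x ∈ T, w x = 0) → w = 0) : finrank F W ≤ T.card := by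
  have hinj : Function.Injective ((LinearMap.funLeft F F ((↑) : T → ι)) ∘ₗ W.subtype) := by
    rw [← LinearMap.ker_eq_bot, LinearMap.ker_eq_bot']
    rintro ⟨w, hw⟩ h
    exact Subtype.ext (hT w hw fun x hx => congrFun h ⟨x, hx⟩)
  simpa using LinearMap.finrank_le_finrank_of_injective hinj

end Counting

section Coordinates

variable {F ι : Type*} [Field F] (p : ι → Prop) [DecidablePred p]

def restrictCoords : (ι → F) →ₗ[F] ι → F where
  toFun f x := if p x then f x else 0
  map_add' f g := funext fun x => by by_cases hx : p x <;> simp [hx]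
  map_smul' c f := funext fun x => by by_cases hx : p x <;> simp [hx]

theorem restrictCoords_apply (f : ι → F) (x : ι) :
    restrictCoords p f x = if p x then f x else 0 := rfl

theorem map_restrictCoords_true (W : Submodule F (ι → F)) :
    W.map (restrictCoords fun _ => True) = W := by
  convert W.map_id
  ext f x
  simp [restrictCoords_apply]

variable [Fintype ι] [DecidableEq ι]

theorem finrank_span_single_one :
    finrank F (span F {f : ι → F | ∃ x, p x ∧ f = Pi.single x 1}) =
      (Finset.univ.filter p).card := by
  have hrange : {f : ι → F | ∃ x, p x ∧ f = Pi.single x 1} =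
      Set.range fun x : {x // p x} => (Pi.single x.1 1 : ι → F) := by
    ext f
    simp [eq_comm]
  rw [hrange, finrank_span_eq_card (b := fun x : {x // p x} => (Pi.single x.1 1 : ι → F))
    ((Pi.linearIndependent_single_one ι F).comp _ Subtype.val_injective),
    Fintype.card_subtype]

theorem ker_restrictCoords :
    LinearMap.ker (restrictCoords (F := F) p) =
      LinearMap.BilinForm.orthogonal (dotProductBilin F F)
        (span F {f : ι → F | ∃ x, p x ∧ f = Pi.single x 1}) := by
  ext f
  rw [LinearMap.mem_ker, mem_orthogonal_span_dotProduct_iff, funext_iff]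
  simp only [restrictCoords_apply, Pi.zero_apply, ite_eq_right_iff, Set.mem_ofPred_eq,
    forall_exists_index, and_imp]
  exact ⟨fun h g x hx hg => by simp [hg, h x hx], fun h x hx => by simpa using h _ x hx rfl⟩

theorem finrank_map_restrictCoords_orthogonal (S : Submodule F (ι → F)) :
    finrank F ((LinearMap.BilinForm.orthogonal (dotProductBilin F F) S).map (restrictCoords p)) =
      (Finset.univ.filter p).card -
        finrank F ↥(span F {f : ι → F | ∃ x, p x ∧ f = Pi.single x 1} ⊓ S) := by
  have hrank := finrank_map_add_finrank_inf_ker (restrictCoords p)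
    (LinearMap.BilinForm.orthogonal (dotProductBilin F F) S)
  rw [ker_restrictCoords, ← LinearMap.BilinForm.orthogonal_sup,
    LinearMap.BilinForm.finrank_orthogonal nondegenerate_dotProductBilin,
    LinearMap.BilinForm.finrank_orthogonal nondegenerate_dotProductBilin] at hrank
  rw [inf_comm, ← finrank_span_single_one (F := F) p]
  set P := span F {f : ι → F | ∃ x, p x ∧ f = Pi.single x 1}
  have hsup := finrank_sup_add_finrank_inf_eq S P
  have hle := (S ⊔ P).finrank_le
  rw [finrank_fintype_fun_eq_card] at hrank hle
  omega

end Coordinates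

namespace UCycle

variable {V E : Type} {ends : E → Sym2 V}

theorem mem_range_vtx_iff (c : UCycle ends) {v : V} :
    v ∈ Set.range c.vtx ↔ ∃ i, v ∈ ends (c.edge i) := by
  constructor
  · rintro ⟨i, rfl⟩
    exact ⟨i, by rw [c.edge_ends]; exact Sym2.mem_mk_left _ _⟩
  · rintro ⟨i, hi⟩
    rcases Sym2.mem_iff.1 (c.edge_ends i ▸ hi) with rfl | rfl
    exacts [⟨i, rfl⟩, ⟨i + 1, rfl⟩]

noncomputable def edgeVec (c : UCycle ends) : E → ZMod 2 :=
  (Set.range c.edge).indicator 1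

theorem edgeVec_apply_edge (c : UCycle ends) (i : ZMod (c.n + 1)) : c.edgeVec (c.edge i) = 1 :=
  Set.indicator_of_mem (Set.mem_range_self i) _

theorem edgeVec_apply_of_notMem (c : UCycle ends) {x : E} (hx : x ∉ Set.range c.edge) :
    c.edgeVec x = 0 :=
  Set.indicator_of_notMem hx _

theorem dotProduct_edgeVec [Fintype E] (c : UCycle ends) (g : E → ZMod 2) :
    g ⬝ᵥ c.edgeVec = ∑ i, g (c.edge i) :=
  (Fintype.sum_of_injective c.edge c.edge_inj _ _
    (fun x hx => by rw [edgeVec_apply_of_notMem c hx, mul_zero])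
    (fun i => by rw [edgeVec_apply_edge, mul_one])).symm

end UCycle

section CycleSpace

variable {V E : Type} [DecidableEq V] (ends : E → Sym2 V)

-- Also right for loops, where both sides vanish since `1 + 1 = 0`.
theorem vertexVec_apply_of_ends_eq {x : E} {a b : V} (h : ends x = s(a, b)) (w : V) :
    vertexVec ends w x = (if w = a then 1 else 0) + (if w = b then 1 else 0) := by
  rw [vertexVec, h]
  by_cases hwa : w = a <;> by_cases hwb : w = b
  · subst hwa hwb
    simp only [Sym2.mem_mk_left, ne_eq, not_true_eq_false, and_false, if_false, if_true]
    decide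
  · subst hwa
    simp [hwb, Ne.symm hwb]
  · subst hwb
    simp [hwa, Ne.symm hwa]
  · simp [hwa, hwb]

theorem UCycle.vertexVec_dotProduct_edgeVec [Fintype E] (c : UCycle ends) (w : V) :
    vertexVec ends w ⬝ᵥ c.edgeVec = 0 := by
  -- `w` is counted once as `c.vtx i` and once as `c.vtx (i + 1)`.
  simp_rw [c.dotProduct_edgeVec, vertexVec_apply_of_ends_eq ends (c.edge_ends _),
    Finset.sum_add_distrib]
  rw [Fintype.sum_equiv (Equiv.addRight 1) (fun i => if w = c.vtx (i + 1) then 1 else 0)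
    (fun i => if w = c.vtx i then 1 else 0) fun _ => rfl]
  exact CharTwo.add_self_eq_zero _

variable [Fintype E]

def cycleSpace : Submodule (ZMod 2) (E → ZMod 2) :=
  LinearMap.BilinForm.orthogonal (dotProductBilin (ZMod 2) (ZMod 2))
    (span (ZMod 2) (Set.range (vertexVec ends)))

variable {ends}

theorem mem_cycleSpace_iff {f : E → ZMod 2} :
    f ∈ cycleSpace ends ↔ ∀ w, vertexVec ends w ⬝ᵥ f = 0 := by
  rw [cycleSpace, mem_orthogonal_span_dotProduct_iff, Set.forall_mem_range]

theorem UCycle.edgeVec_mem_cycleSpace (c : UCycle ends) : c.edgeVec ∈ cycleSpace ends :=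
  mem_cycleSpace_iff.2 (c.vertexVec_dotProduct_edgeVec ends)

theorem finrank_cycleSpace [DecidableEq E] :
    finrank (ZMod 2) (cycleSpace ends) =
      Fintype.card E - finrank (ZMod 2) (span (ZMod 2) (Set.range (vertexVec ends))) := by
  rw [cycleSpace, LinearMap.BilinForm.finrank_orthogonal nondegenerate_dotProductBilin,
    finrank_fintype_fun_eq_card]

theorem exists_ne_of_mem_cycleSpace {f : E → ZMod 2} (hf : f ∈ cycleSpace ends) {x : E}
    (hx : f x ≠ 0) {w : V} (hw : w ∈ ends x) (hloop : ends x ≠ s(w, w)) :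
    ∃ y, f y ≠ 0 ∧ y ≠ x ∧ w ∈ ends y := by
  by_contra! h
  have hw0 := mem_cycleSpace_iff.1 hf w
  rw [dotProduct, Finset.sum_eq_single x] at hw0
  · simp [vertexVec, hw, hloop, hx] at hw0
  · intro y _ hyx
    by_cases hy : f y = 0
    · simp [hy]
    · simp [vertexVec, h y hy hyx]
  · simp

end CycleSpace

section Walks

variable {V E : Type} {ends : E → Sym2 V}

theorem exists_ucycle_of_injOn {m : ℕ} {a : ℕ → V} {b : ℕ → E} (ha : Set.InjOn a (Set.Iic m))
    (hb : Set.InjOn b (Set.Iic m)) (hab : ∀ t ≤ m, ends (b t) = s(a t, a (t + 1)))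
    (hclose : a (m + 1) = a 0) : ∃ c : UCycle ends, Set.range c.edge ⊆ Set.range b := by
  have hval (t : ZMod (m + 1)) : t.val ∈ Set.Iic m := Nat.lt_succ_iff.1 t.val_lt
  refine ⟨⟨m, fun t => a t.val, fun t => b t.val, fun s t h => ZMod.val_injective _
    (ha (hval s) (hval t) h), fun s t h => ZMod.val_injective _ (hb (hval s) (hval t) h),
    fun t => ?_⟩, Set.range_comp_subset_range ZMod.val b⟩
  show ends (b t.val) = s(a t.val, a (t + 1).val)
  rw [hab _ (hval t), ZMod.val_add, ZMod.val_one_eq_one_mod, Nat.add_mod_mod]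
  rcases (Set.mem_Iic.1 (hval t)).lt_or_eq with ht | ht
  · rw [Nat.mod_eq_of_lt (by omega)]
  · rw [ht, Nat.mod_self, hclose]

theorem exists_walk {D : Set E} (hD : ∀ x ∈ D, ∀ w ∈ ends x, ∃ y ∈ D, y ≠ x ∧ w ∈ ends y)
    {x₀ : E} (hx₀ : x₀ ∈ D) :
    ∃ (v : ℕ → V) (e : ℕ → E), (∀ i, e i ∈ D) ∧ (∀ i, ends (e i) = s(v i, v (i + 1))) ∧
      ∀ i, e (i + 1) ≠ e i := by
  choose next hnextD hnext_ne hnext_mem using hD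
  -- Walk along an edge of `D` to its other end `w`, then leave `w` by another edge of `D`.
  let State := {p : E × V // p.1 ∈ D ∧ p.2 ∈ ends p.1}
  let step (p : State) : State :=
    ⟨(next _ p.2.1 _ (Sym2.other_mem p.2.2), Sym2.Mem.other p.2.2),
      hnextD _ _ _ _, hnext_mem _ _ _ _⟩
  let walk (i : ℕ) := step^[i] ⟨(x₀, (ends x₀).out.1), hx₀, Sym2.out_fst_mem _⟩
  refine ⟨fun i => (walk i).1.2, fun i => (walk i).1.1, fun i => (walk i).2.1, fun i => ?_,
    fun i => ?_⟩
  · simp only [walk, Function.iterate_succ_apply']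
    exact (Sym2.other_spec _).symm
  · simp only [walk, Function.iterate_succ_apply']
    exact hnext_ne _ _ _ _

theorem exists_first_repeat [Finite V] (v : ℕ → V) :
    ∃ i j, i < j ∧ v i = v j ∧ ∀ s t, i ≤ s → s ≤ j → i ≤ t → t ≤ j → v s = v t →
      s = t ∨ (s = i ∧ t = j) ∨ (s = j ∧ t = i) := by
  have hrep : ∃ j, ∃ i < j, v i = v j := by
    obtain ⟨i, j, hij, h⟩ := Finite.exists_ne_map_eq_of_infinite v
    rcases hij.lt_or_gt with hlt | hlt
    exacts [⟨j, i, hlt, h⟩, ⟨i, j, hlt, h.symm⟩]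
  classical
  obtain ⟨i, hij, hvij⟩ := Nat.find_spec hrep
  have hfirst : ∀ s t, i ≤ s → s < t → t ≤ Nat.find hrep → v s = v t →
      s = i ∧ t = Nat.find hrep := by
    intro s t his hst htj h
    have ht : t = Nat.find hrep := by
      by_contra ht
      exact Nat.find_min hrep (lt_of_le_of_ne htj ht) ⟨s, hst, h⟩
    refine ⟨?_, ht⟩
    by_contra hs
    exact Nat.find_min hrep (show s < Nat.find hrep by omega)
      ⟨i, by omega, hvij.trans (ht ▸ h).symm⟩
  refine ⟨i, Nat.find hrep, hij, hvij, fun s t his hsj hit htj h => ?_⟩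
  rcases lt_trichotomy s t with hst | rfl | hts
  · exact Or.inr (Or.inl (hfirst s t his hst htj h))
  · exact Or.inl rfl
  · exact Or.inr (Or.inr (hfirst t s hit hts hsj h.symm).symm)

theorem exists_ucycle_of_walk [Finite V] {v : ℕ → V} {e : ℕ → E}
    (hends : ∀ i, ends (e i) = s(v i, v (i + 1))) (hne : ∀ i, e (i + 1) ≠ e i) :
    ∃ c : UCycle ends, Set.range c.edge ⊆ Set.range e := by
  obtain ⟨i, j, hij, hvij, hrepeat⟩ := exists_first_repeat v
  have ha : Set.InjOn (fun t => v (i + t)) (Set.Iic (j - i - 1)) := by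
    intro s hs t ht h
    rw [Set.mem_Iic] at hs ht
    have := hrepeat _ _ (by omega) (by omega) (by omega) (by omega) h
    omega
  have hb : Set.InjOn (fun t => e (i + t)) (Set.Iic (j - i - 1)) := by
    intro s hs t ht h
    rw [Set.mem_Iic] at hs ht
    have h' : s(v (i + s), v (i + s + 1)) = s(v (i + t), v (i + t + 1)) := by
      rw [← hends, ← hends]
      exact congrArg ends h
    -- Crossed endpoints force `{s, t} = {0, 1}`: the walk would turn back along one edge.
    rcases Sym2.eq_iff.1 h' with ⟨h1, -⟩ | ⟨h1, h2⟩
    · have := hrepeat _ _ (by omega) (by omega) (by omega) (by omega) h1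
      omega
    · have := hrepeat _ _ (by omega) (by omega) (by omega) (by omega) h1
      have := hrepeat _ _ (by omega) (by omega) (by omega) (by omega) h2
      have : s = t ∨ (s = 0 ∧ t = 1) ∨ (s = 1 ∧ t = 0) := by omega
      rcases this with hst | ⟨rfl, rfl⟩ | ⟨rfl, rfl⟩
      exacts [hst, absurd h.symm (hne i), absurd h (hne i)]
  have hclose : v (i + (j - i - 1 + 1)) = v (i + 0) := by
    rw [show i + (j - i - 1 + 1) = j by omega]
    exact hvij.symm
  obtain ⟨c, hc⟩ := exists_ucycle_of_injOn ha hb (fun t _ => hends (i + t)) hclose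
  exact ⟨c, hc.trans (Set.range_comp_subset_range (i + ·) e)⟩

end Walks

section Bounds

variable {V E : Type} [DecidableEq V] [Fintype E] {ends : E → Sym2 V}

theorem exists_ucycle_of_mem_cycleSpace [Finite V] {f : E → ZMod 2} (hf : f ∈ cycleSpace ends)
    {x : E} (hx : f x ≠ 0) : ∃ c : UCycle ends, ∀ i, f (c.edge i) ≠ 0 := by
  by_cases hloop : ∃ y w, f y ≠ 0 ∧ ends y = s(w, w)
  · -- A loop is a cycle with one vertex.
    obtain ⟨y, w, hy, hyw⟩ := hloop
    have hsingle : Set.InjOn (fun _ : ℕ => w) (Set.Iic 0) := fun s hs t ht _ => by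
      rw [Set.mem_Iic] at hs ht
      omega
    obtain ⟨c, hc⟩ := exists_ucycle_of_injOn (b := fun _ => y) hsingle
      (fun s hs t ht _ => hsingle hs ht rfl) (fun _ _ => hyw) rfl
    refine ⟨c, fun i => ?_⟩
    obtain ⟨_, h⟩ := hc (Set.mem_range_self i)
    rwa [← h]
  · push Not at hloop
    obtain ⟨v, e, heD, hends, hne⟩ := exists_walk (D := {y | f y ≠ 0})
      (fun y hy w hw => exists_ne_of_mem_cycleSpace hf hy hw (hloop y w hy)) hx
    obtain ⟨c, hc⟩ := exists_ucycle_of_walk hends hne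
    refine ⟨c, fun i => ?_⟩
    obtain ⟨k, hk⟩ := hc (Set.mem_range_self i)
    exact hk ▸ heD k

theorem exists_ucycle_mem_of_mem_cycleSpace [Finite V] {f : E → ZMod 2}
    (hf : f ∈ cycleSpace ends) {x : E} (hx : f x ≠ 0) :
    ∃ c : UCycle ends, (∀ i, f (c.edge i) ≠ 0) ∧ x ∈ Set.range c.edge := by
  classical
  induction hn : (Finset.univ.filter fun y => f y ≠ 0).card using Nat.strong_induction_on
    generalizing f with
  | _ n ih =>
  obtain ⟨c, hc⟩ := exists_ucycle_of_mem_cycleSpace hf hx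
  by_cases hxc : x ∈ Set.range c.edge
  · exact ⟨c, hc, hxc⟩
  -- Adding `c.edgeVec` deletes the edges of `c` from the support of `f`, which strictly shrinks.
  have hsupp : ∀ y, (f + c.edgeVec) y ≠ 0 ↔ f y ≠ 0 ∧ y ∉ Set.range c.edge := by
    intro y
    by_cases hy : y ∈ Set.range c.edge
    · obtain ⟨i, rfl⟩ := hy
      simp [c.edgeVec_apply_edge, Fin.eq_one_of_ne_zero _ (hc i)]
      rfl
    · simp [c.edgeVec_apply_of_notMem hy, hy]
  have hlt : (Finset.univ.filter fun y => (f + c.edgeVec) y ≠ 0).card < n := by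
    rw [← hn]
    refine Finset.card_lt_card
      ((Finset.ssubset_iff_of_subset fun y hy => ?_).2 ⟨c.edge 0, ?_, ?_⟩)
    · simp only [Finset.mem_filter, Finset.mem_univ, true_and] at hy ⊢
      exact ((hsupp y).1 hy).1
    · simpa using hc 0
    · exact fun h => ((hsupp _).1 (Finset.mem_filter.1 h).2).2 (Set.mem_range_self 0)
  obtain ⟨c', hc', hxc'⟩ := ih _ hlt (add_mem hf c.edgeVec_mem_cycleSpace)
    ((hsupp x).2 ⟨hx, hxc⟩) rfl
  exact ⟨c', fun i => ((hsupp _).1 (hc' i)).1, hxc'⟩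

variable (p : E → Prop) [DecidablePred p]

theorem card_le_finrank_map_restrictCoords_cycleSpace {k : ℕ} (g : Fin k → UCycle ends)
    (hp : ∀ i, ∃ j, p ((g i).edge j))
    (hdisj : ∀ i j, i ≠ j → Disjoint (Set.range (g i).edge) (Set.range (g j).edge)) :
    k ≤ finrank (ZMod 2) ((cycleSpace ends).map (restrictCoords p)) := by
  choose j hj using hp
  simpa using card_le_finrank_of_diagonal _ (fun i => restrictCoords p (g i).edgeVec)
    (fun i => mem_map_of_mem (g i).edgeVec_mem_cycleSpace) (fun i => (g i).edge (j i))
    (fun i => by simp [restrictCoords_apply, hj i, UCycle.edgeVec_apply_edge])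
    (fun i i' hii' => by
      rw [restrictCoords_apply, UCycle.edgeVec_apply_of_notMem _
        (Set.disjoint_left.1 (hdisj i i' hii') (Set.mem_range_self _)), ite_self])

theorem finrank_map_restrictCoords_cycleSpace_le [Finite V] (T : Finset E) (hT : ∀ x ∈ T, p x)
    (hcut : ∀ c : UCycle ends, (∃ j, p (c.edge j)) → ∃ x ∈ T, x ∈ Set.range c.edge) :
    finrank (ZMod 2) ((cycleSpace ends).map (restrictCoords p)) ≤ T.card := by
  refine finrank_le_card_of_vanishing_on _ T ?_
  rintro _ ⟨f, hf, rfl⟩ hfT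
  ext x
  rw [restrictCoords_apply]
  split_ifs with hx
  · by_contra hfx
    obtain ⟨c, hc, i, rfl⟩ := exists_ucycle_mem_of_mem_cycleSpace hf hfx
    obtain ⟨y, hy, k, rfl⟩ := hcut c ⟨i, hx⟩
    exact hc k (by simpa [restrictCoords_apply, hT _ hy] using hfT _ hy)
  · rfl

theorem finrank_map_restrictCoords_cycleSpace_pos_iff [Finite V] :
    0 < finrank (ZMod 2) ((cycleSpace ends).map (restrictCoords p)) ↔
      ∃ c : UCycle ends, ∃ j, p (c.edge j) := by
  refine ⟨fun hpos => ?_, fun ⟨c, j, hj⟩ => card_le_finrank_map_restrictCoords_cycleSpace p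
    (fun _ : Fin 1 => c) (fun _ => ⟨j, hj⟩) fun i i' h => absurd (Subsingleton.elim i i') h⟩
  by_contra! h
  have := finrank_map_restrictCoords_cycleSpace_le p ∅ (by simp)
    fun c ⟨j, hj⟩ => absurd hj (h c j)
  rw [Finset.card_empty] at this
  omega

end Bounds

section Main

variable {V E : Type} [DecidableEq V] [Fintype E] (ends : E → Sym2 V)

def cycleSpaceAt (v : V) : Submodule (ZMod 2) (E → ZMod 2) :=
  (cycleSpace ends).map (restrictCoords (v ∈ ends ·))

theorem uPacking_le_finrank_cycleSpace : uPacking ends ≤ finrank (ZMod 2) (cycleSpace ends) := by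
  refine csSup_le ⟨0, Fin.elim0, fun i => i.elim0⟩ ?_
  rintro k ⟨g, hg⟩
  rw [← map_restrictCoords_true (cycleSpace ends)]
  exact card_le_finrank_map_restrictCoords_cycleSpace _ g (fun _ => ⟨0, trivial⟩) hg

theorem finrank_cycleSpace_le_uCutNumber [Finite V] :
    finrank (ZMod 2) (cycleSpace ends) ≤ uCutNumber ends := by
  refine le_csInf ⟨_, Finset.univ, rfl, fun c => ⟨c.edge 0, Finset.mem_univ _, 0, rfl⟩⟩ ?_
  rintro k ⟨T, rfl, hT⟩
  rw [← map_restrictCoords_true (cycleSpace ends)]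
  exact finrank_map_restrictCoords_cycleSpace_le _ T (fun _ _ => trivial) fun c _ => hT c

theorem finrank_cycleSpace_pos_iff [Finite V] :
    0 < finrank (ZMod 2) (cycleSpace ends) ↔ Nonempty (UCycle ends) := by
  rw [← map_restrictCoords_true (cycleSpace ends), finrank_map_restrictCoords_cycleSpace_pos_iff]
  exact ⟨fun ⟨c, _⟩ => ⟨c⟩, fun ⟨c⟩ => ⟨c, 0, trivial⟩⟩

theorem uPackingAt_le_finrank_cycleSpaceAt (v : V) :
    uPackingAt ends v ≤ finrank (ZMod 2) (cycleSpaceAt ends v) := by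
  refine csSup_le ⟨0, Fin.elim0, fun i => i.elim0, fun i => i.elim0⟩ ?_
  rintro k ⟨g, hv, hg⟩
  exact card_le_finrank_map_restrictCoords_cycleSpace _ g
    (fun i => (g i).mem_range_vtx_iff.1 (hv i)) hg

theorem finrank_cycleSpaceAt_le_uCutNumberAt [Finite V] (v : V) :
    finrank (ZMod 2) (cycleSpaceAt ends v) ≤ uCutNumberAt ends v := by
  refine le_csInf ⟨_, Finset.univ.filter (v ∈ ends ·), fun x hx => (Finset.mem_filter.1 hx).2,
    rfl, fun c hc => ?_⟩ ?_
  · obtain ⟨i, hi⟩ := c.mem_range_vtx_iff.1 hc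
    exact ⟨c.edge i, Finset.mem_filter.2 ⟨Finset.mem_univ _, hi⟩, i, rfl⟩
  · rintro k ⟨T, hTv, rfl, hT⟩
    exact finrank_map_restrictCoords_cycleSpace_le _ T hTv
      fun c hc => hT c (c.mem_range_vtx_iff.2 hc)

theorem finrank_cycleSpaceAt_pos_iff [Finite V] (v : V) :
    0 < finrank (ZMod 2) (cycleSpaceAt ends v) ↔ ∃ c : UCycle ends, v ∈ Set.range c.vtx :=
  (finrank_map_restrictCoords_cycleSpace_pos_iff _).trans <| by simp_rw [UCycle.mem_range_vtx_iff]

end Main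

theorem stmt16 {V E : Type} [Fintype V] [Fintype E] [DecidableEq V] [DecidableEq E]
    (ends : E → Sym2 V) :
    (uPacking ends ≤
        Fintype.card E -
          Module.finrank (ZMod 2) (Submodule.span (ZMod 2) (Set.range (vertexVec ends))) ∧
      Fintype.card E -
          Module.finrank (ZMod 2) (Submodule.span (ZMod 2) (Set.range (vertexVec ends))) ≤
        uCutNumber ends) ∧
    (Module.finrank (ZMod 2) (Submodule.span (ZMod 2) (Set.range (vertexVec ends))) <
        Fintype.card E ↔ Nonempty (UCycle ends)) ∧
    ∀ v : V,
      (uPackingAt ends v ≤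
          (Finset.univ.filter fun x : E => v ∈ ends x).card -
            Module.finrank (ZMod 2)
              ↥((Submodule.span (ZMod 2)
                  {f : E → ZMod 2 | ∃ x : E, v ∈ ends x ∧ f = Pi.single x (1 : ZMod 2)}) ⊓
                Submodule.span (ZMod 2) (Set.range (vertexVec ends))) ∧
        (Finset.univ.filter fun x : E => v ∈ ends x).card -
            Module.finrank (ZMod 2)
              ↥((Submodule.span (ZMod 2)
                  {f : E → ZMod 2 | ∃ x : E, v ∈ ends x ∧ f = Pi.single x (1 : ZMod 2)}) ⊓
                Submodule.span (ZMod 2) (Set.range (vertexVec ends))) ≤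
          uCutNumberAt ends v) ∧
      (Module.finrank (ZMod 2)
            ↥((Submodule.span (ZMod 2)
                {f : E → ZMod 2 | ∃ x : E, v ∈ ends x ∧ f = Pi.single x (1 : ZMod 2)}) ⊓
              Submodule.span (ZMod 2) (Set.range (vertexVec ends))) <
          (Finset.univ.filter fun x : E => v ∈ ends x).card ↔
        ∃ c : UCycle ends, v ∈ Set.range c.vtx) := by
  rw [← tsub_pos_iff_lt, ← finrank_cycleSpace]
  refine ⟨⟨uPacking_le_finrank_cycleSpace ends, finrank_cycleSpace_le_uCutNumber ends⟩,
    finrank_cycleSpace_pos_iff ends, fun v => ?_⟩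
  rw [← tsub_pos_iff_lt, ← finrank_map_restrictCoords_orthogonal]
  exact ⟨⟨uPackingAt_le_finrank_cycleSpaceAt ends v, finrank_cycleSpaceAt_le_uCutNumberAt ends v⟩,
    finrank_cycleSpaceAt_pos_iff ends v⟩
end

section
/- Let X, Y and Z be three pairwise disjoint finite sets of variables. Then the sets Δ = {e_l(X ∪ Z) − e_l(Y ∪ Z) | l ≥ 1} and Δ' = {e_l(X) − e_l(Y) | l ≥ 1} generate the same ideal of the polynomial ring ℤ[X ∪ Y ∪ Z]. -/
/-!
Write `e_l(S)` for the elementary symmetric polynomials. Since `Z` is disjoint from `X` and `Y`,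
`e_l(X ∪ Z) - e_l(Y ∪ Z) = ∑_{i + j = l} (e_i(X) - e_i(Y)) e_j(Z)`, i.e. the generating series
of `Δ` is that of `Δ'` times `∑ e_j(Z) tʲ`, whose constant term is `1`. Hence every element of
`Δ` lies in the ideal generated by `Δ'`, and conversely, by induction on `l`,
`e_l(X) - e_l(Y)` is `e_l(X ∪ Z) - e_l(Y ∪ Z)` minus a combination of lower elements of `Δ'`.
-/

open MvPolynomial

open Finset

theorem Ideal.span_pos_terms_eq_of_antidiagonal_mul {R : Type*} [CommRing R] (e f c : ℕ → R)
    (hf : f 0 = 0) (hc : IsUnit (c 0))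
    (he : ∀ l, e l = ∑ p ∈ antidiagonal l, f p.1 * c p.2) :
    Ideal.span {p : R | ∃ l : ℕ, 1 ≤ l ∧ p = e l} =
      Ideal.span {p : R | ∃ l : ℕ, 1 ≤ l ∧ p = f l} := by
  set I := Ideal.span {p : R | ∃ l : ℕ, 1 ≤ l ∧ p = e l}
  set J := Ideal.span {p : R | ∃ l : ℕ, 1 ≤ l ∧ p = f l}
  have hfI : ∀ l, f l ∈ I := by
    intro l
    induction l using Nat.strong_induction_on with
    | _ l ih =>
      cases l with
      | zero => simp [hf]
      | succ n =>
        have hsplit : f (n + 1) * c 0 =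
            e (n + 1) - ∑ p ∈ antidiagonal n, f p.1 * c (p.2 + 1) := by
          rw [he, Nat.sum_antidiagonal_succ']
          ring
        rw [← Ideal.mul_unit_mem_iff_mem I hc, hsplit]
        exact I.sub_mem (Ideal.subset_span ⟨n + 1, by omega, rfl⟩)
          (I.sum_mem fun _ hp => I.mul_mem_right _ (ih _ (Nat.antidiagonal.fst_lt hp)))
  refine le_antisymm (Ideal.span_le.mpr ?_) (Ideal.span_le.mpr ?_) <;> rintro _ ⟨l, -, rfl⟩
  · rw [he]
    refine J.sum_mem fun p _ => J.mul_mem_right _ ?_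
    rcases Nat.eq_zero_or_pos p.1 with h0 | hpos
    · simp [h0, hf]
    · exact Ideal.subset_span ⟨p.1, hpos, rfl⟩
  · exact hfI l

section
variable {R : Type} [CommRing R] {E : Type}

lemma esymmOf_zero (s : Finset E) : esymmOf R s 0 = 1 := by
  simp [esymmOf]

lemma coeff_prod_one_add_C_X_mul (s : Finset E) (l : ℕ) :
    (∏ x ∈ s, (1 + Polynomial.C (X x : MvPolynomial E R) * Polynomial.X)).coeff l =
      esymmOf R s l := by
  simp_rw [prod_one_add, prod_mul_distrib, ← map_prod, prod_const,
    Polynomial.finsetSum_coeff, Polynomial.coeff_C_mul_X_pow, esymmOf, powersetCard_eq_filter,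
    sum_filter, eq_comm]

lemma esymmOf_union [DecidableEq E] {s t : Finset E} (h : Disjoint s t) (l : ℕ) :
    esymmOf R (s ∪ t) l = ∑ p ∈ antidiagonal l, esymmOf R s p.1 * esymmOf R t p.2 := by
  simp_rw [← coeff_prod_one_add_C_X_mul, prod_union h, Polynomial.coeff_mul]

theorem span_esymmOf_union_sub_eq [DecidableEq E] {s t u : Finset E}
    (hsu : Disjoint s u) (htu : Disjoint t u) :
    Ideal.span {p : MvPolynomial E R | ∃ l : ℕ, 1 ≤ l ∧
        p = esymmOf R (s ∪ u) l - esymmOf R (t ∪ u) l} =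
      Ideal.span {p : MvPolynomial E R | ∃ l : ℕ, 1 ≤ l ∧ p = esymmOf R s l - esymmOf R t l} :=
  Ideal.span_pos_terms_eq_of_antidiagonal_mul _ _ (esymmOf R u) (by simp [esymmOf_zero])
    (by simp [esymmOf_zero]) fun l => by
      simp_rw [esymmOf_union hsu, esymmOf_union htu, ← sum_sub_distrib, sub_mul]

end

theorem stmt18 {X Y Z : Type} [Fintype X] [Fintype Y] [Fintype Z]
    [DecidableEq X] [DecidableEq Y] [DecidableEq Z] :
    Ideal.span {p : MvPolynomial (X ⊕ Y ⊕ Z) ℤ | ∃ l : ℕ, 1 ≤ l ∧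
        p = esymmOf ℤ ((Finset.univ.image (Sum.inl : X → X ⊕ Y ⊕ Z)) ∪
              (Finset.univ.image (fun z : Z => Sum.inr (Sum.inr z) : Z → X ⊕ Y ⊕ Z))) l
          - esymmOf ℤ ((Finset.univ.image (fun y : Y => Sum.inr (Sum.inl y) : Y → X ⊕ Y ⊕ Z)) ∪
              (Finset.univ.image (fun z : Z => Sum.inr (Sum.inr z) : Z → X ⊕ Y ⊕ Z))) l} =
      Ideal.span {p : MvPolynomial (X ⊕ Y ⊕ Z) ℤ | ∃ l : ℕ, 1 ≤ l ∧
        p = esymmOf ℤ (Finset.univ.image (Sum.inl : X → X ⊕ Y ⊕ Z)) l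
          - esymmOf ℤ (Finset.univ.image (fun y : Y => Sum.inr (Sum.inl y) : Y → X ⊕ Y ⊕ Z)) l} :=
  span_esymmOf_union_sub_eq (by simp [disjoint_left]) (by simp [disjoint_left])
end
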